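/- arXiv:1312.2794 — 5 statements merged into one kernel-verified Lean document; each statement's English description precedes it below -/
import Mathlib

section
/- Let D be a nonempty convex open set in ℝ^d, let a ∈ D, and let d_a = dist(a, ∂D) > 0. Then for every x ∈ ℝ^d, |x - Π(x)| ≤ d_a^{-1} ⟨x - a, x - Π(x)⟩, where Π(x) denotes the metric projection of x onto closure D. -/
/-!
The projection `p = Π x` onto the closed convex set `closure D` is characterised by the
variational inequality `⟪x - p, w - p⟫ ≤ 0` for all `w ∈ closure D`. Since the closed ball of
radius `d_a` about `a` lies in `closure D` (the open ball is connected, misses `∂D` and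
contains `a ∈ D`), we may test it at `w = a + d_a (x - p) / ‖x - p‖`,
which gives `d_a ‖x - p‖ ≤ ⟪x - a, x - p⟫ - ‖x - p‖² ≤ ⟪x - a, x - p⟫`.
-/

open scoped RealInnerProductSpace
open Metric Set

theorem IsPreconnected.subset_interior_of_disjoint_frontier {X : Type*} [TopologicalSpace X]
    {s t : Set X} (ht : IsPreconnected t) (hts : Disjoint t (frontier s))
    (hne : (t ∩ interior s).Nonempty) : t ⊆ interior s := by
  refine ht.subset_left_of_subset_union isOpen_interior isClosed_closure.isOpen_compl
    (disjoint_compl_right.mono_right (compl_subset_compl.2 interior_subset_closure)) ?_ hne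
  intro z hz
  by_cases hzc : z ∈ closure s
  · exact .inl (by_contra fun hzi => hts.ne_of_mem hz ⟨hzc, hzi⟩ rfl)
  · exact .inr hzc

theorem ball_infDist_frontier_subset_interior {E : Type*} [NormedAddCommGroup E]
    [NormedSpace ℝ E] {s : Set E} {a : E} (ha : a ∈ s) :
    ball a (infDist a (frontier s)) ⊆ interior s := by
  rcases le_or_gt (infDist a (frontier s)) 0 with hr | hr
  · simp [ball_eq_empty.2 hr]
  have ha' : a ∈ interior s := by
    rw [← self_sdiff_frontier]
    exact ⟨ha, fun h => hr.ne' (infDist_zero_of_mem h)⟩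
  exact (convex_ball a _).isPreconnected.subset_interior_of_disjoint_frontier
    disjoint_ball_infDist ⟨a, mem_ball_self hr, ha'⟩

theorem closedBall_infDist_frontier_subset_closure {E : Type*} [NormedAddCommGroup E]
    [NormedSpace ℝ E] {s : Set E} {a : E} (ha : a ∈ s) (hr : 0 < infDist a (frontier s)) :
    closedBall a (infDist a (frontier s)) ⊆ closure s := by
  rw [← closure_ball a hr.ne']
  exact closure_mono ((ball_infDist_frontier_subset_interior ha).trans interior_subset)

theorem real_inner_sub_le_zero_of_forall_dist_le {F : Type*} [NormedAddCommGroup F]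
    [InnerProductSpace ℝ F] {K : Set F} (hK : Convex ℝ K) {x p : F} (hp : p ∈ K)
    (hmin : ∀ y ∈ K, dist x p ≤ dist x y) : ∀ w ∈ K, ⟪x - p, w - p⟫ ≤ 0 := by
  have : Nonempty K := ⟨⟨p, hp⟩⟩
  refine (norm_eq_iInf_iff_real_inner_le_zero hK hp).1 (le_antisymm ?_ ?_)
  · exact le_ciInf fun w => by simpa only [dist_eq_norm] using hmin w w.2
  · exact ciInf_le ⟨0, forall_mem_range.2 fun _ => norm_nonneg _⟩ (⟨p, hp⟩ : K)

theorem mul_norm_sub_le_inner_of_closedBall_subset {F : Type*} [NormedAddCommGroup F]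
    [InnerProductSpace ℝ F] {K : Set F} {a x p : F} {r : ℝ} (hr : 0 ≤ r)
    (hball : closedBall a r ⊆ K) (hvar : ∀ w ∈ K, ⟪x - p, w - p⟫ ≤ 0) :
    r * ‖x - p‖ ≤ ⟪x - a, x - p⟫ := by
  set v := x - p
  rcases eq_or_ne v 0 with hv | hv
  · simp [hv]
  have hvn : 0 < ‖v‖ := norm_pos_iff.2 hv
  have hw : a + (r / ‖v‖) • v ∈ closedBall a r := by
    rw [mem_closedBall, dist_eq_norm, add_sub_cancel_left, norm_smul, Real.norm_eq_abs,
      abs_of_nonneg (div_nonneg hr hvn.le), div_mul_cancel₀ _ hvn.ne']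
  have key := hvar _ (hball hw)
  have hsplit : a + (r / ‖v‖) • v - p = (r / ‖v‖) • v + v - (x - a) := by
    simp only [v]; abel
  rw [hsplit, inner_sub_right, inner_add_right, real_inner_smul_right,
    real_inner_self_eq_norm_sq, real_inner_comm] at key
  have : r / ‖v‖ * ‖v‖ ^ 2 = r * ‖v‖ := by field_simp
  nlinarith [sq_nonneg ‖v‖]

theorem stmt2_general (d : ℕ) (D : Set (EuclideanSpace ℝ (Fin d)))
    (hconv : Convex ℝ D)
    (a : EuclideanSpace ℝ (Fin d)) (ha : a ∈ D)
    (hda : 0 < Metric.infDist a (frontier D))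
    (proj : EuclideanSpace ℝ (Fin d) → EuclideanSpace ℝ (Fin d))
    (hproj : ∀ z, proj z ∈ closure D ∧ ∀ y ∈ closure D, dist z (proj z) ≤ dist z y) :
    ∀ x : EuclideanSpace ℝ (Fin d),
      ‖x - proj x‖ ≤ (Metric.infDist a (frontier D))⁻¹ * ⟪x - a, x - proj x⟫ := by
  intro x
  rw [le_inv_mul_iff₀ hda]
  exact mul_norm_sub_le_inner_of_closedBall_subset hda.le
    (closedBall_infDist_frontier_subset_closure ha hda)
    (real_inner_sub_le_zero_of_forall_dist_le hconv.closure (hproj x).1 (hproj x).2)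

theorem stmt2 (d : ℕ) (D : Set (EuclideanSpace ℝ (Fin d)))
    (hD : IsOpen D) (hconv : Convex ℝ D) (hne : D.Nonempty)
    (a : EuclideanSpace ℝ (Fin d)) (ha : a ∈ D)
    (hda : 0 < Metric.infDist a (frontier D))
    (proj : EuclideanSpace ℝ (Fin d) → EuclideanSpace ℝ (Fin d))
    (hproj : ∀ z, proj z ∈ closure D ∧ ∀ y ∈ closure D, dist z (proj z) ≤ dist z y) :
    ∀ x : EuclideanSpace ℝ (Fin d),
      ‖x - proj x‖ ≤ (Metric.infDist a (frontier D))⁻¹ * ⟪x - a, x - proj x⟫ :=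
  stmt2_general d D hconv a ha hda proj hproj
end

section
/- Let D ⊆ ℝ^d be open convex, a ∈ D, d_a = dist(a, ∂D). Let y: [0,∞) → ℝ^d be càdlàg with y(0) ∈ closure D, let x^n solve x^n_t = y_t - n ∫_0^t (x^n_s - Π(x^n_s)) ds, and set k^n_t = -n ∫_0^t (x^n_s - Π(x^n_s)) ds. Then for any q, δ > 0 with ω'_y(δ, q) < d_a/2, one has sup_{t ≤ q} |x^n_t - a| ≤ 2√7 (⌊q/δ⌋ + 1) sup_{t ≤ q} |y_t - a|. -/
open scoped RealInnerProductSpace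
open MeasureTheory Set Filter

variable {d : ℕ}

/-- A càdlàg function on `[0,∞)`: right-continuous with left limits. -/
def Cadlag (f : ℝ → EuclideanSpace ℝ (Fin d)) : Prop :=
  (∀ t : ℝ, 0 ≤ t → ContinuousWithinAt f (Set.Ici t) t) ∧
  (∀ t : ℝ, 0 < t → ∃ l, Filter.Tendsto f (nhdsWithin t (Set.Iio t)) (nhds l))

/-- `proj` is the metric projection (nearest-point map) onto `C`. -/
def IsProjOn (C : Set (EuclideanSpace ℝ (Fin d)))
    (proj : EuclideanSpace ℝ (Fin d) → EuclideanSpace ℝ (Fin d)) : Prop :=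
  ∀ z, proj z ∈ C ∧ ∀ w ∈ C, dist z (proj z) ≤ dist z w

/-- `x` solves the penalized equation `x t = y t - c ∫_0^t (x s - proj (x s)) ds`. -/
def PenalizedSol (proj : EuclideanSpace ℝ (Fin d) → EuclideanSpace ℝ (Fin d))
    (c : ℝ) (y x : ℝ → EuclideanSpace ℝ (Fin d)) : Prop :=
  (∀ t : ℝ, 0 ≤ t → IntervalIntegrable (fun s => x s - proj (x s)) volume 0 t) ∧
  (∀ t : ℝ, 0 ≤ t → x t = y t - c • ∫ s in (0:ℝ)..t, (x s - proj (x s)))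

/-- The oscillation of `f` on `[s, t)` is `< c`. -/
def OscLtOn (f : ℝ → EuclideanSpace ℝ (Fin d)) (s t c : ℝ) : Prop :=
  ∀ u ∈ Set.Ico s t, ∀ v ∈ Set.Ico s t, ‖f u - f v‖ < c

/-- `ω'_f(δ, q) < c`: there is a subdivision `0 = s 0 < ⋯ < s r = q` whose first `r - 1`
steps have length `≥ δ` and on whose half-open intervals `f` oscillates less than `c`. -/
def OmegaPrimeLt (f : ℝ → EuclideanSpace ℝ (Fin d)) (δ q c : ℝ) : Prop :=
  ∃ r : ℕ, 0 < r ∧ ∃ s : ℕ → ℝ, s 0 = 0 ∧ s r = q ∧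
    (∀ k < r, s k < s (k + 1)) ∧ (∀ k, k + 1 < r → δ ≤ s (k + 1) - s k) ∧
    ∀ k < r, OscLtOn f (s k) (s (k + 1)) c

open Topology

/-!
On an interval `[u, v)` where `y` stays within `ρ = dist(a, ∂D)` of `y u`, consider
`w τ = y u - a - n ∫₀^τ (x - Π x) = x τ - p τ` with `p τ = a + (y τ - y u)`. Since `p τ` lies in the
closed ball of radius `ρ` about `a`, hence in `closure D`, the variational inequality of the
projection gives `⟪w τ, x τ - Π (x τ)⟫ ≥ 0`, so the right derivative of `‖w‖²` is nonpositive and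
`‖w‖` does not increase. Thus `‖x - a‖` grows by at most `2 sup ‖y - a‖` across each interval of a
subdivision realising `ω'_y(δ, q) < ρ / 2`, and such a subdivision has at most `⌊q / δ⌋ + 1`
intervals.
-/

section NearestPoint

variable {E : Type*} [NormedAddCommGroup E] [InnerProductSpace ℝ E] {C : Set E} {proj : E → E}

theorem real_inner_sub_proj_sub_proj_nonpos (hC : Convex ℝ C)
    (hproj : ∀ z, proj z ∈ C ∧ ∀ w ∈ C, dist z (proj z) ≤ dist z w) (z : E) {w : E}
    (hw : w ∈ C) : ⟪z - proj z, w - proj z⟫ ≤ 0 := by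
  have : Nonempty C := ⟨⟨w, hw⟩⟩
  refine (norm_eq_iInf_iff_real_inner_le_zero hC (hproj z).1).1 (le_antisymm ?_ ?_) w hw
  · exact le_ciInf fun p => by simpa only [dist_eq_norm] using (hproj z).2 p p.2
  · refine ciInf_le ?_ (⟨proj z, (hproj z).1⟩ : C)
    exact ⟨0, by rintro _ ⟨p, rfl⟩; exact norm_nonneg _⟩

theorem real_inner_sub_proj_sub_nonneg (hC : Convex ℝ C)
    (hproj : ∀ z, proj z ∈ C ∧ ∀ w ∈ C, dist z (proj z) ≤ dist z w) (z : E) {p : E}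
    (hp : p ∈ C) : 0 ≤ ⟪z - proj z, z - p⟫ := by
  have h := real_inner_sub_proj_sub_proj_nonpos hC hproj z hp
  have hsplit : z - p = (z - proj z) - (p - proj z) := by abel
  rw [hsplit, inner_sub_right, real_inner_self_eq_norm_sq]
  linarith [sq_nonneg ‖z - proj z‖]

theorem lipschitzWith_one_proj (hC : Convex ℝ C)
    (hproj : ∀ z, proj z ∈ C ∧ ∀ w ∈ C, dist z (proj z) ≤ dist z w) :
    LipschitzWith 1 proj := by
  refine LipschitzWith.of_dist_le_mul fun z w => ?_
  simp only [NNReal.coe_one, one_mul, dist_eq_norm]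
  have hz := real_inner_sub_proj_sub_proj_nonpos hC hproj z (hproj w).1
  have hw := real_inner_sub_proj_sub_proj_nonpos hC hproj w (hproj z).1
  -- adding the two variational inequalities
  have key : ‖proj z - proj w‖ ^ 2 ≤ ⟪z - w, proj z - proj w⟫ := by
    have hsplit : z - w = (proj z - proj w) + (z - proj z) - (w - proj w) := by abel
    rw [← neg_sub (proj z) (proj w), inner_neg_right] at hz
    rw [hsplit, inner_sub_left, inner_add_left, real_inner_self_eq_norm_sq]
    linarith
  nlinarith [real_inner_le_norm (z - w) (proj z - proj w), norm_nonneg (proj z - proj w),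
    norm_nonneg (z - w)]

end NearestPoint

theorem Metric.infDist_frontier_le_infDist_compl {E : Type*} [NormedAddCommGroup E]
    [NormedSpace ℝ E] [FiniteDimensional ℝ E] {x : E} {s : Set E} (hx : x ∈ s) :
    Metric.infDist x (frontier s) ≤ Metric.infDist x sᶜ := by
  rcases eq_or_ne s univ with rfl | hs
  · simp
  obtain ⟨y, hy, hxy⟩ := exists_mem_frontier_infDist_compl_eq_dist hx hs
  exact hxy ▸ Metric.infDist_le_dist_of_mem hy

theorem norm_le_of_hasDerivWithinAt_Ici_of_inner_nonpos {E : Type*} [NormedAddCommGroup E]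
    [InnerProductSpace ℝ E] {f f' : ℝ → E} {u v : ℝ} (hf : ContinuousOn f (Icc u v))
    (hf' : ∀ σ ∈ Ico u v, HasDerivWithinAt f (f' σ) (Ici σ) σ)
    (hinner : ∀ σ ∈ Ico u v, ⟪f σ, f' σ⟫ ≤ 0) {t : ℝ} (ht : t ∈ Icc u v) : ‖f t‖ ≤ ‖f u‖ := by
  have hsq : ‖f t‖ ^ 2 ≤ ‖f u‖ ^ 2 :=
    image_le_of_deriv_right_le_deriv_boundary (f := (‖f ·‖ ^ 2)) (B := fun _ => ‖f u‖ ^ 2)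
      (hf.norm.pow 2) (fun σ hσ => (hf' σ hσ).norm_sq) le_rfl continuousOn_const
      (fun σ _ => hasDerivWithinAt_const σ _ _) (fun σ hσ => by linarith [hinner σ hσ]) ht
  exact (pow_le_pow_iff_left₀ (norm_nonneg _) (norm_nonneg _) two_ne_zero).1 hsq

section Subdivision

variable {α : Type*} [LinearOrder α] {s : ℕ → α} {t : α}

theorem exists_lt_mem_Ico_of_mem_Ico : ∀ {r : ℕ}, t ∈ Ico (s 0) (s r) →
    ∃ k < r, t ∈ Ico (s k) (s (k + 1))
  | 0, ht => absurd ht (by simp)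
  | r + 1, ht => by
    by_cases hr : s r ≤ t
    · exact ⟨r, r.lt_succ_self, hr, ht.2⟩
    · obtain ⟨k, hk, hkt⟩ := exists_lt_mem_Ico_of_mem_Ico ⟨ht.1, not_le.1 hr⟩
      exact ⟨k, hk.trans r.lt_succ_self, hkt⟩

theorem monotoneOn_Iic_of_le_succ {r : ℕ} (hs : ∀ k < r, s k ≤ s (k + 1)) :
    MonotoneOn s (Iic r) :=
  monotoneOn_of_le_succ ordConnected_Iic fun k _ _ hk => by
    simpa only [Order.succ_eq_add_one] using hs k (by simpa [Order.succ_eq_add_one] using hk)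

end Subdivision

theorem le_floor_div_add_one_of_forall_le_sub {s : ℕ → ℝ} {r : ℕ} {δ : ℝ} (hδ : 0 < δ)
    (hs : ∀ k < r, s k ≤ s (k + 1)) (hstep : ∀ k, k + 1 < r → δ ≤ s (k + 1) - s k) :
    r ≤ ⌊(s r - s 0) / δ⌋₊ + 1 := by
  rcases Nat.eq_zero_or_pos r with rfl | hr
  · exact Nat.zero_le _
  have hgrowth : ∀ k < r, k * δ ≤ s k - s 0 := by
    intro k
    induction k with
    | zero => simp
    | succ k ih =>
      intro hk
      push_cast
      linarith [ih (by omega), hstep k hk]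
  have hlast : ((r - 1 : ℕ) : ℝ) * δ ≤ s r - s 0 := by
    have := hs (r - 1) (by omega)
    rw [Nat.sub_add_cancel hr] at this
    linarith [hgrowth (r - 1) (by omega)]
  have := Nat.le_floor ((le_div_iff₀ hδ).2 hlast)
  omega

namespace PenalizedSol

variable {proj : EuclideanSpace ℝ (Fin d) → EuclideanSpace ℝ (Fin d)} {c : ℝ}
  {y x : ℝ → EuclideanSpace ℝ (Fin d)}

theorem apply_zero (hx : PenalizedSol proj c y x) : x 0 = y 0 := by
  simpa using hx.2 0 le_rfl

theorem continuousOn_integral (hx : PenalizedSol proj c y x) :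
    ContinuousOn (fun t => ∫ s in (0:ℝ)..t, (x s - proj (x s))) (Ici 0) := by
  intro t ht
  have hint : IntervalIntegrable (fun s => x s - proj (x s)) volume (min 0 0) (max 0 (t + 1)) := by
    simpa [max_eq_right (by linarith [mem_Ici.1 ht] : (0:ℝ) ≤ t + 1)]
      using hx.1 (t + 1) (by linarith [mem_Ici.1 ht])
  refine (intervalIntegral.continuousWithinAt_primitive (b₀ := t) Real.volume_singleton
    hint).mono_of_mem_nhdsWithin ?_
  rw [← Ici_inter_Iic]
  exact inter_mem_nhdsWithin _ (Iic_mem_nhds (lt_add_one t))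

theorem continuousWithinAt_Ici (hx : PenalizedSol proj c y x) {t : ℝ} (ht : 0 ≤ t)
    (hy : ContinuousWithinAt y (Ici t) t) : ContinuousWithinAt x (Ici t) t := by
  have hF := (hx.continuousOn_integral t ht).mono (Ici_subset_Ici.2 ht)
  exact (hy.sub (hF.const_smul c)).congr (fun τ hτ => hx.2 τ (ht.trans hτ)) (hx.2 t ht)

theorem hasDerivWithinAt_integral (hx : PenalizedSol proj c y x) (hproj : Continuous proj)
    {t : ℝ} (ht : 0 ≤ t) (hy : ContinuousWithinAt y (Ici t) t) :
    HasDerivWithinAt (fun t => ∫ s in (0:ℝ)..t, (x s - proj (x s))) (x t - proj (x t))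
      (Ici t) t := by
  have hmeas : StronglyMeasurableAtFilter (fun s => x s - proj (x s)) (𝓝[>] t) := by
    refine AEStronglyMeasurable.stronglyMeasurableAtFilter_of_mem ?_
      (Ioc_mem_nhdsGT (lt_add_one t))
    exact ((hx.1 (t + 1) (by linarith)).1.mono_set
      (Ioc_subset_Ioc_left ht)).aestronglyMeasurable
  have hxt := hx.continuousWithinAt_Ici ht hy
  exact intervalIntegral.integral_hasDerivWithinAt_right (hx.1 t ht) hmeas
    ((hxt.sub (hproj.continuousAt.comp_continuousWithinAt hxt)).mono Ioi_subset_Ici_self)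

variable {C : Set (EuclideanSpace ℝ (Fin d))} {a : EuclideanSpace ℝ (Fin d)} {ρ : ℝ}

theorem norm_sub_le_add_of_forall_norm_sub_le (hC : Convex ℝ C) (hproj : IsProjOn C proj)
    (hball : Metric.closedBall a ρ ⊆ C) (hc : 0 ≤ c) (hx : PenalizedSol proj c y x)
    (hy : ∀ t, 0 ≤ t → ContinuousWithinAt y (Ici t) t) {u v : ℝ} (hu : 0 ≤ u)
    (hosc : ∀ σ ∈ Ico u v, ‖y σ - y u‖ ≤ ρ) {t : ℝ} (ht : t ∈ Icc u v) :
    ‖x t - a‖ ≤ ‖x u - a‖ + ‖y t - y u‖ := by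
  set w := fun τ => (y u - a) - c • ∫ s in (0:ℝ)..τ, (x s - proj (x s)) with hw_def
  have hw : ∀ τ, 0 ≤ τ → w τ = x τ - (a + (y τ - y u)) := fun τ hτ => by
    rw [hw_def]; dsimp only; rw [hx.2 τ hτ]; abel
  have hwcont : ContinuousOn w (Icc u v) :=
    continuousOn_const.sub ((hx.continuousOn_integral.mono
      fun τ hτ => hu.trans (mem_Icc.1 hτ).1).const_smul c)
  have hwderiv : ∀ σ ∈ Ico u v,
      HasDerivWithinAt w (-(c • (x σ - proj (x σ)))) (Ici σ) σ := fun σ hσ =>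
    ((hx.hasDerivWithinAt_integral (lipschitzWith_one_proj hC hproj).continuous
      (hu.trans hσ.1) (hy σ (hu.trans hσ.1))).const_smul c).const_sub _
  have hinner : ∀ σ ∈ Ico u v, ⟪w σ, -(c • (x σ - proj (x σ)))⟫ ≤ 0 := by
    intro σ hσ
    have hp : a + (y σ - y u) ∈ C :=
      hball (by simpa [Metric.mem_closedBall, dist_eq_norm] using hosc σ hσ)
    rw [inner_neg_right, real_inner_smul_right, hw σ (hu.trans hσ.1), real_inner_comm,
      neg_nonpos]
    exact mul_nonneg hc (real_inner_sub_proj_sub_nonneg hC hproj (x σ) hp)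
  have hwt := norm_le_of_hasDerivWithinAt_Ici_of_inner_nonpos hwcont hwderiv hinner ht
  rw [hw u hu, hw t (hu.trans ht.1), sub_self, add_zero] at hwt
  calc ‖x t - a‖ = ‖(x t - (a + (y t - y u))) + (y t - y u)‖ := by congr 1; abel
    _ ≤ ‖x u - a‖ + ‖y t - y u‖ := (norm_add_le _ _).trans (by gcongr)

theorem norm_sub_le_of_subdivision (hC : Convex ℝ C) (hproj : IsProjOn C proj)
    (hball : Metric.closedBall a ρ ⊆ C) (hc : 0 ≤ c) (hx : PenalizedSol proj c y x)
    (hy : ∀ t, 0 ≤ t → ContinuousWithinAt y (Ici t) t) {r : ℕ} {s : ℕ → ℝ} (hs0 : s 0 = 0)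
    (hs : ∀ k < r, s k < s (k + 1))
    (hosc : ∀ k < r, ∀ σ ∈ Ico (s k) (s (k + 1)), ‖y σ - y (s k)‖ ≤ ρ) {R : ℝ}
    (hR : ∀ t ∈ Icc 0 (s r), ‖y t - a‖ ≤ R) {t : ℝ} (ht : t ∈ Icc 0 (s r)) :
    ‖x t - a‖ ≤ (2 * r + 1) * R := by
  have hmono := monotoneOn_Iic_of_le_succ fun k hk => (hs k hk).le
  have hsmem : ∀ k ≤ r, s k ∈ Icc 0 (s r) := fun k hk =>
    ⟨hs0 ▸ hmono (Nat.zero_le r) hk (Nat.zero_le k), hmono hk (le_refl r) hk⟩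
  have hR0 : 0 ≤ R := (norm_nonneg _).trans (hR _ (hsmem 0 (Nat.zero_le r)))
  have hpiece : ∀ k < r, ∀ τ ∈ Icc (s k) (s (k + 1)), ‖x τ - a‖ ≤ ‖x (s k) - a‖ + 2 * R := by
    intro k hk τ hτ
    have hτR := hR τ ⟨(hsmem k hk.le).1.trans hτ.1, hτ.2.trans (hsmem (k + 1) hk).2⟩
    have hkR := hR (s k) (hsmem k hk.le)
    have hyτ := norm_sub_le_norm_sub_add_norm_sub (y τ) a (y (s k))
    rw [norm_sub_rev a] at hyτ
    linarith [hx.norm_sub_le_add_of_forall_norm_sub_le hC hproj hball hc hy (hsmem k hk.le).1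
      (hosc k hk) hτ]
  have hnode : ∀ k ≤ r, ‖x (s k) - a‖ ≤ (2 * k + 1) * R := by
    intro k
    induction k with
    | zero => intro _; simpa [hs0, hx.apply_zero] using hR 0 (hs0 ▸ hsmem 0 (Nat.zero_le r))
    | succ k ih =>
      intro hk
      push_cast
      linarith [ih (by omega), hpiece k hk (s (k + 1)) ⟨(hs k hk).le, le_rfl⟩]
  rcases ht.2.eq_or_lt with rfl | htr
  · exact hnode r le_rfl
  · obtain ⟨k, hk, hkt⟩ := exists_lt_mem_Ico_of_mem_Ico (s := s) ⟨hs0 ▸ ht.1, htr⟩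
    have hkr : (k : ℝ) + 1 ≤ r := by exact_mod_cast hk
    nlinarith [hpiece k hk t (Ico_subset_Icc_self hkt), hnode k hk.le]

end PenalizedSol

theorem OmegaPrimeLt.isBounded_image {f : ℝ → EuclideanSpace ℝ (Fin d)} {δ q c : ℝ}
    (h : OmegaPrimeLt f δ q c) : Bornology.IsBounded (f '' Icc 0 q) := by
  obtain ⟨r, -, s, hs0, hsq, hs, -, hosc⟩ := h
  refine ((Bornology.isBounded_singleton (x := f q)).union
    ((Bornology.isBounded_biUnion_finset (Finset.range r)).2
      fun k _ => Metric.isBounded_closedBall (x := f (s k)) (r := c))).subset ?_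
  rintro _ ⟨t, ht, rfl⟩
  rcases ht.2.eq_or_lt with rfl | htq
  · exact Or.inl rfl
  · obtain ⟨k, hk, hkt⟩ := exists_lt_mem_Ico_of_mem_Ico (s := s) ⟨hs0 ▸ ht.1, hsq ▸ htq⟩
    refine Or.inr (mem_biUnion (Finset.mem_range.2 hk) ?_)
    rw [Metric.mem_closedBall, dist_eq_norm]
    exact (hosc k hk t hkt (s k) ⟨le_rfl, hs k hk⟩).le

theorem stmt4_general (d : ℕ) (D : Set (EuclideanSpace ℝ (Fin d)))
    (hconv : Convex ℝ D)
    (a : EuclideanSpace ℝ (Fin d)) (ha : a ∈ D)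
    (proj : EuclideanSpace ℝ (Fin d) → EuclideanSpace ℝ (Fin d))
    (hproj : IsProjOn (closure D) proj)
    (y : ℝ → EuclideanSpace ℝ (Fin d)) (hy : Cadlag y)
    (n : ℕ) (x : ℝ → EuclideanSpace ℝ (Fin d))
    (hx : PenalizedSol proj (n : ℝ) y x)
    (q δ : ℝ) (hδ : 0 < δ)
    (hω : OmegaPrimeLt y δ q (Metric.infDist a (frontier D) / 2)) :
    ∀ t ∈ Set.Icc (0:ℝ) q,
      ‖x t - a‖ ≤ 2 * Real.sqrt 7 * (⌊q / δ⌋₊ + 1) * ⨆ s : Set.Icc (0:ℝ) q, ‖y s - a‖ := by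
  obtain ⟨M, hM⟩ := hω.isBounded_image.subset_closedBall a
  have hR : ∀ t ∈ Icc 0 q, ‖y t - a‖ ≤ ⨆ s : Icc (0:ℝ) q, ‖y s - a‖ := fun t ht =>
    le_ciSup (f := fun s : Icc (0:ℝ) q => ‖y s - a‖) ⟨M, by
      rintro _ ⟨s, rfl⟩; exact mem_closedBall_iff_norm.1 (hM ⟨s, s.2, rfl⟩)⟩ ⟨t, ht⟩
  obtain ⟨r, -, s, hs0, hsq, hs, hstep, hosc⟩ := hω
  have hball : Metric.closedBall a (Metric.infDist a (frontier D)) ⊆ closure D :=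
    (Metric.closedBall_subset_closedBall (Metric.infDist_frontier_le_infDist_compl ha)).trans
      (Metric.closedBall_infDist_compl_subset_closure ha)
  have hcount : r ≤ ⌊q / δ⌋₊ + 1 := by
    simpa [hs0, hsq] using le_floor_div_add_one_of_forall_le_sub hδ (fun k hk => (hs k hk).le) hstep
  intro t ht
  have hosc' : ∀ k < r, ∀ σ ∈ Ico (s k) (s (k + 1)),
      ‖y σ - y (s k)‖ ≤ Metric.infDist a (frontier D) := fun k hk σ hσ =>
    (hosc k hk σ hσ (s k) ⟨le_rfl, hs k hk⟩).le.trans (half_le_self Metric.infDist_nonneg)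
  have hbound := hx.norm_sub_le_of_subdivision hconv.closure hproj hball n.cast_nonneg hy.1 hs0
    hs hosc' (fun t ht => hR t (hsq ▸ ht)) (hsq ▸ ht)
  have hR0 := (norm_nonneg _).trans (hR t ht)
  have hsqrt : (5 / 2 : ℝ) ≤ √7 := Real.le_sqrt_of_sq_le (by norm_num)
  have hcoef : 2 * (r : ℝ) + 1 ≤ 2 * √7 * (⌊q / δ⌋₊ + 1) := by
    have : (r : ℝ) ≤ ⌊q / δ⌋₊ + 1 := by exact_mod_cast hcount
    nlinarith [Nat.cast_nonneg (α := ℝ) ⌊q / δ⌋₊]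
  exact hbound.trans (mul_le_mul_of_nonneg_right hcoef hR0)

/-- Lemma 2.2(i): a priori bound for solutions of the penalized equation. -/
theorem stmt4 (d : ℕ) (D : Set (EuclideanSpace ℝ (Fin d)))
    (hD : IsOpen D) (hconv : Convex ℝ D) (hne : D.Nonempty)
    (a : EuclideanSpace ℝ (Fin d)) (ha : a ∈ D)
    (proj : EuclideanSpace ℝ (Fin d) → EuclideanSpace ℝ (Fin d))
    (hproj : IsProjOn (closure D) proj)
    (y : ℝ → EuclideanSpace ℝ (Fin d)) (hy : Cadlag y) (hy0 : y 0 ∈ closure D)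
    (n : ℕ) (x : ℝ → EuclideanSpace ℝ (Fin d))
    (hx : PenalizedSol proj (n : ℝ) y x)
    (q δ : ℝ) (hq : 0 < q) (hδ : 0 < δ)
    (hω : OmegaPrimeLt y δ q (Metric.infDist a (frontier D) / 2)) :
    ∀ t ∈ Set.Icc (0:ℝ) q,
      ‖x t - a‖ ≤ 2 * Real.sqrt 7 * (⌊q / δ⌋₊ + 1) * ⨆ s : Set.Icc (0:ℝ) q, ‖y s - a‖ :=
  stmt4_general d D hconv a ha proj hproj y hy n x hx q δ hδ hω
end

section
/- Let y^n, y be càdlàg functions [0,∞) → ℝ^d with y^n_0 ∈ closure D, and suppose y^n → y in the Skorokhod J₁ topology. Let x^n solve the penalized equation x^n_t = y^n_t - n∫_0^t (x^n_s - Π(x^n_s)) ds with penalization term k^n. Then for every q > 0: sup_{n} sup_{t ≤ q} |x^n_t| < ∞ and sup_n |k^n|_q < ∞, where |k^n|_q = n∫_0^q |x^n_s - Π(x^n_s)| ds. -/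
open scoped RealInnerProductSpace
open MeasureTheory Set Filter

variable {d : ℕ}

/-- Convergence in the Skorokhod `J₁` topology on `D([0,∞), F)`, via time changes. -/
def J1Tendsto {F : Type*} [NormedAddCommGroup F] (fn : ℕ → ℝ → F) (f : ℝ → F) : Prop :=
  ∃ lam : ℕ → ℝ → ℝ,
    (∀ n, StrictMono (lam n) ∧ Continuous (lam n) ∧ lam n 0 = 0 ∧
      Filter.Tendsto (lam n) Filter.atTop Filter.atTop) ∧
    ∀ q > (0:ℝ), ∀ ε > (0:ℝ), ∃ N : ℕ, ∀ n ≥ N, ∀ t ∈ Set.Icc (0:ℝ) q,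
      |lam n t - t| ≤ ε ∧ ‖fn n (lam n t) - f t‖ ≤ ε

/-- `(x, k)` solves the Skorokhod problem on the convex domain `D` associated with `y`:
`x = y + k`, `x` is `closure D`-valued, `k` is of locally bounded variation with `k 0 = 0`,
`dk = n d|k|` where `n` is an inward normal at `x` on the boundary, and `|k|` increases
only when `x ∈ ∂D`.  Here `v` plays the role of `|k|` and `nv` of the normal field. -/
def IsSkorokhodSol (D : Set (EuclideanSpace ℝ (Fin d)))
    (y x : ℝ → EuclideanSpace ℝ (Fin d)) : Prop :=
  ∃ (k : ℝ → EuclideanSpace ℝ (Fin d)) (v : StieltjesFunction ℝ)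
    (nv : ℝ → EuclideanSpace ℝ (Fin d)),
    (∀ t : ℝ, 0 ≤ t → x t = y t + k t) ∧
    (∀ t : ℝ, 0 ≤ t → x t ∈ closure D) ∧
    k 0 = 0 ∧ v 0 = 0 ∧
    (∀ t : ℝ, 0 ≤ t → k t = ∫ s in Set.Ioc (0:ℝ) t, nv s ∂v.measure) ∧
    (∀ s : ℝ, 0 ≤ s → x s ∈ frontier D →
      ‖nv s‖ = 1 ∧ ∀ z ∈ closure D, 0 ≤ ⟪z - x s, nv s⟫) ∧
    v.measure {s : ℝ | 0 ≤ s ∧ x s ∉ frontier D} = 0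

/-!
A ball `closedBall a ρ ⊆ closure D` makes the pull of the penalization quantitative:
`⟪x - Π x, x - a⟫ ≥ ρ ‖x - Π x‖`. Hence on an interval `[s, t)` where `y` oscillates by less
than `ρ / 2`, the energy identity for `x - y + y s - a` (whose derivative is the penalization)
shows that `‖x t - a‖ ≤ ‖x s - a‖ + ρ / 2` and `c ρ ∫ₛᵗ ‖x - Π x‖ ≤ ‖x s - a‖²`. Chaining this over
a partition of `[0, q]` into `r` such intervals bounds `x` and `|k|_q` in terms of `r` and
`sup ‖y‖` only. A càdlàg `y` admits such a partition, and the time changes of the `J₁`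
convergence carry a partition for the limit to partitions with the same `r` for all large `n`;
the finitely many remaining `n` are bounded one at a time.
-/

section InnerProduct

variable {E : Type*} [NormedAddCommGroup E] [InnerProductSpace ℝ E]

theorem IntervalIntegrable.inner_of_continuousOn {w g : ℝ → E} {s t : ℝ}
    (hw : IntervalIntegrable w volume s t) (hg : ContinuousOn g (uIcc s t)) :
    IntervalIntegrable (fun u => ⟪w u, g u⟫) volume s t := by
  rw [intervalIntegrable_iff'] at hw ⊢
  obtain ⟨C, hC⟩ := isCompact_uIcc.exists_bound_of_continuousOn hg
  refine (hw.norm.mul_const C).mono'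
    (hw.aestronglyMeasurable.inner (hg.aestronglyMeasurable measurableSet_uIcc)) ?_
  refine ae_restrict_of_forall_mem measurableSet_uIcc fun u hu => ?_
  calc ‖⟪w u, g u⟫‖ ≤ ‖w u‖ * ‖g u‖ := norm_inner_le_norm _ _
    _ ≤ ‖w u‖ * C := by gcongr; exact hC u hu

theorem intervalIntegral_integral_swap_triangle {G : Type*} [NormedAddCommGroup G]
    [NormedSpace ℝ G] [CompleteSpace G] {F : ℝ → ℝ → G} {s t : ℝ} (hst : s ≤ t)
    (hF : Integrable (Function.uncurry F)
      ((volume.restrict (Ioc s t)).prod (volume.restrict (Ioc s t)))) :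
    ∫ u in s..t, ∫ v in u..t, F u v = ∫ v in s..t, ∫ u in s..v, F u v := by
  set μ := volume.restrict (Ioc s t)
  set I : ℝ × ℝ → G := {p | p.1 < p.2}.indicator (Function.uncurry F)
  have hI : Integrable I (μ.prod μ) :=
    hF.indicator (measurableSet_lt measurable_fst measurable_snd)
  have hleft : ∀ u ∈ Ioc s t, ∫ v, I (u, v) ∂μ = ∫ v in u..t, F u v := by
    intro u hu
    have hslice : (fun v => I (u, v)) = (Ioi u).indicator (F u) := by
      ext v; by_cases h : u < v <;> simp [I, h]
    rw [hslice, integral_indicator measurableSet_Ioi, Measure.restrict_restrict measurableSet_Ioi,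
      intervalIntegral.integral_of_le hu.2,
      show Ioi u ∩ Ioc s t = Ioc u t by ext; simp only [mem_inter_iff, mem_Ioi, mem_Ioc]; grind]
  have hright : ∀ v ∈ Ioc s t, ∫ u, I (u, v) ∂μ = ∫ u in s..v, F u v := by
    intro v hv
    have hslice : (fun u => I (u, v)) = (Iio v).indicator (fun u => F u v) := by
      ext u; by_cases h : u < v <;> simp [I, h]
    rw [hslice, integral_indicator measurableSet_Iio, Measure.restrict_restrict measurableSet_Iio,
      intervalIntegral.integral_of_le hv.1.le,
      show Iio v ∩ Ioc s t = Ioo s v by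
        ext; simp only [mem_inter_iff, mem_Iio, mem_Ioc, mem_Ioo]; grind,
      integral_Ioc_eq_integral_Ioo]
  rw [intervalIntegral.integral_of_le hst, intervalIntegral.integral_of_le hst,
    ← setIntegral_congr_fun measurableSet_Ioc hleft,
    ← setIntegral_congr_fun measurableSet_Ioc hright]
  exact integral_integral_swap (f := fun u v => I (u, v)) hI

theorem mul_norm_sub_le_inner_of_closedBall_subset_s7 {K : Set E} (hK : Convex ℝ K) {ξ p a : E}
    {ρ : ℝ} (hρ : 0 ≤ ρ) (hp : p ∈ K) (hmin : ∀ w ∈ K, dist ξ p ≤ dist ξ w)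
    (hball : Metric.closedBall a ρ ⊆ K) :
    ρ * ‖ξ - p‖ ≤ ⟪ξ - p, p - a⟫ := by
  have hvar : ∀ w ∈ K, ⟪ξ - p, w - p⟫ ≤ 0 := by
    have : Nonempty K := ⟨⟨p, hp⟩⟩
    refine (norm_eq_iInf_iff_real_inner_le_zero hK hp).1 (le_antisymm (le_ciInf fun w => ?_) ?_)
    · simpa [dist_eq_norm] using hmin w w.2
    · exact ciInf_le ⟨0, forall_mem_range.2 fun _ => norm_nonneg _⟩ (⟨p, hp⟩ : K)
  rcases eq_or_ne ξ p with rfl | hξp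
  · simp
  have hn : 0 < ‖ξ - p‖ := norm_pos_iff.2 (sub_ne_zero.2 hξp)
  -- test the variational inequality at the point of the ball farthest in the direction `ξ - p`
  have hw : a + (ρ / ‖ξ - p‖) • (ξ - p) ∈ K := hball <| by
    rw [Metric.mem_closedBall, dist_eq_norm, add_sub_cancel_left, norm_smul, Real.norm_eq_abs,
      abs_of_nonneg (by positivity), div_mul_cancel₀ _ hn.ne']
  have h := hvar _ hw
  rw [show a + (ρ / ‖ξ - p‖) • (ξ - p) - p = (ρ / ‖ξ - p‖) • (ξ - p) - (p - a) by abel,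
    inner_sub_right, real_inner_smul_right, real_inner_self_eq_norm_sq] at h
  calc ρ * ‖ξ - p‖ = ρ / ‖ξ - p‖ * ‖ξ - p‖ ^ 2 := by field_simp
    _ ≤ ⟪ξ - p, p - a⟫ := by linarith

variable [CompleteSpace E]

theorem intervalIntegral_inner_left {w : ℝ → E} {s t : ℝ} (hw : IntervalIntegrable w volume s t)
    (c : E) : ∫ u in s..t, ⟪c, w u⟫ = ⟪c, ∫ u in s..t, w u⟫ :=
  (innerSL ℝ c).intervalIntegral_comp_comm hw

theorem integral_inner_primitive {w : ℝ → E} {s t : ℝ} (hst : s ≤ t)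
    (hw : IntervalIntegrable w volume s t) :
    ∫ u in s..t, ⟪w u, ∫ v in s..u, w v⟫ = ‖∫ u in s..t, w u‖ ^ 2 / 2 := by
  set W := ∫ u in s..t, w u
  have hw' : IntegrableOn w (uIcc s t) := (intervalIntegrable_iff' (f := w)).1 hw
  have hsub : ∀ u ∈ uIcc s t, IntervalIntegrable w volume s u ∧ IntervalIntegrable w volume u t :=
    fun u hu => ⟨hw.mono_set (uIcc_subset_uIcc_left hu), hw.mono_set (uIcc_subset_uIcc_right hu)⟩
  have hF : Integrable (Function.uncurry fun u v => ⟪w u, w v⟫)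
      ((volume.restrict (Ioc s t)).prod (volume.restrict (Ioc s t))) := by
    refine (hw.1.norm.mul_prod hw.1.norm).mono'
      (hw.1.aestronglyMeasurable.comp_fst.inner hw.1.aestronglyMeasurable.comp_snd) ?_
    exact Eventually.of_forall fun p => norm_inner_le_norm (w p.1) (w p.2)
  have hswap : ∫ u in s..t, ⟪w u, ∫ v in u..t, w v⟫ = ∫ u in s..t, ⟪w u, ∫ v in s..u, w v⟫ := by
    calc ∫ u in s..t, ⟪w u, ∫ v in u..t, w v⟫
        = ∫ u in s..t, ∫ v in u..t, ⟪w u, w v⟫ :=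
          intervalIntegral.integral_congr fun u hu =>
            (intervalIntegral_inner_left (hsub u hu).2 _).symm
      _ = ∫ v in s..t, ∫ u in s..v, ⟪w u, w v⟫ := intervalIntegral_integral_swap_triangle hst hF
      _ = ∫ v in s..t, ⟪w v, ∫ u in s..v, w u⟫ := by
          refine intervalIntegral.integral_congr fun v hv => ?_
          simp only [real_inner_comm (w v)]
          exact intervalIntegral_inner_left (hsub v hv).1 _
  have hsplit : ∫ u in s..t, ⟪w u, W⟫
      = ∫ u in s..t, (⟪w u, ∫ v in s..u, w v⟫ + ⟪w u, ∫ v in u..t, w v⟫) := by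
    refine intervalIntegral.integral_congr fun u hu => ?_
    rw [← inner_add_right,
      intervalIntegral.integral_add_adjacent_intervals (hsub u hu).1 (hsub u hu).2]
  have hW : ‖W‖ ^ 2 = ∫ u in s..t, ⟪w u, W⟫ := by
    simp only [real_inner_comm W]
    rw [intervalIntegral_inner_left hw, real_inner_self_eq_norm_sq]
  rw [hW, hsplit, intervalIntegral.integral_add
    (hw.inner_of_continuousOn (intervalIntegral.continuousOn_primitive_interval hw'))
    (hw.inner_of_continuousOn (intervalIntegral.continuousOn_primitive_interval_left hw')), hswap]
  ring

theorem norm_add_intervalIntegral_sq {w : ℝ → E} {s t : ℝ} (hst : s ≤ t)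
    (hw : IntervalIntegrable w volume s t) (c : E) :
    ‖c + ∫ u in s..t, w u‖ ^ 2 = ‖c‖ ^ 2 + 2 * ∫ u in s..t, ⟪w u, c + ∫ v in s..u, w v⟫ := by
  simp only [inner_add_right]
  rw [intervalIntegral.integral_add (hw.inner_of_continuousOn continuousOn_const)
    (hw.inner_of_continuousOn
      (intervalIntegral.continuousOn_primitive_interval' hw left_mem_uIcc)),
    integral_inner_primitive hst hw, norm_add_sq_real]
  simp only [real_inner_comm c]
  rw [intervalIntegral_inner_left hw]
  ring

end InnerProduct

-- A subdivision as in `OmegaPrimeLt f 0 (s r) ε`, with the number `r` of pieces exposed: the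
-- bounds below depend on it.
def OscPartition (f : ℝ → EuclideanSpace ℝ (Fin d)) (r : ℕ) (s : ℕ → ℝ) (ε : ℝ) : Prop :=
  s 0 = 0 ∧ (∀ k < r, s k < s (k + 1)) ∧ ∀ k < r, OscLtOn f (s k) (s (k + 1)) ε

section Partition

variable {f g : ℝ → EuclideanSpace ℝ (Fin d)} {r : ℕ} {s : ℕ → ℝ} {ε : ℝ}

theorem oscLtOn_of_forall_dist_lt {a b : ℝ} {l : EuclideanSpace ℝ (Fin d)}
    (h : ∀ u ∈ Ico a b, dist (f u) l < ε / 2) : OscLtOn f a b ε := fun u hu v hv =>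
  calc ‖f u - f v‖ = dist (f u) (f v) := (dist_eq_norm _ _).symm
    _ ≤ dist (f u) l + dist (f v) l := dist_triangle_right _ _ _
    _ < ε := by linarith [h u hu, h v hv]

theorem OscPartition.le_of_le (hp : OscPartition f r s ε) {i j : ℕ} (hij : i ≤ j) (hjr : j ≤ r) :
    s i ≤ s j := by
  induction j, hij using Nat.le_induction with
  | base => rfl
  | succ j _ ih => exact (ih (by omega)).trans (hp.2.1 j (by omega)).le

theorem OscPartition.nonneg (hp : OscPartition f r s ε) {k : ℕ} (hk : k ≤ r) : 0 ≤ s k :=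
  hp.1 ▸ hp.le_of_le k.zero_le hk

theorem OscPartition.extend (hp : OscPartition f r s ε) {t : ℝ} (ht : s r < t)
    (hosc : OscLtOn f (s r) t ε) :
    OscPartition f (r + 1) (Function.update s (r + 1) t) ε := by
  have hs : ∀ k ≤ r, Function.update s (r + 1) t k = s k :=
    fun k hk => Function.update_of_ne (by omega) _ _
  refine ⟨by rw [hs 0 r.zero_le, hp.1], fun k hk => ?_, fun k hk => ?_⟩ <;>
  rcases (Nat.lt_succ_iff.1 hk).lt_or_eq with hk | rfl
  · rw [hs k hk.le, hs (k + 1) hk]; exact hp.2.1 k hk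
  · rw [hs k le_rfl, Function.update_self]; exact ht
  · rw [hs k hk.le, hs (k + 1) hk]; exact hp.2.2 k hk
  · rw [hs k le_rfl, Function.update_self]; exact hosc

theorem Cadlag.exists_oscPartition (hf : Cadlag f) {Q : ℝ} (hQ : 0 ≤ Q) (hε : 0 < ε) :
    ∃ r s, OscPartition f r s ε ∧ s r = Q := by
  set S := {t | t ≤ Q ∧ ∃ r s, OscPartition f r s ε ∧ s r = t}
  have h0 : 0 ∈ S := ⟨hQ, 0, fun _ => 0, ⟨rfl, by simp, by simp⟩, rfl⟩
  have hbdd : BddAbove S := ⟨Q, fun t ht => ht.1⟩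
  have hext : ∀ t ∈ S, ∀ t', t < t' → t' ≤ Q → OscLtOn f t t' ε → t' ∈ S := by
    rintro t ⟨-, r, s, hp, rfl⟩ t' ht' ht'Q hosc
    exact ⟨ht'Q, r + 1, _, hp.extend ht' hosc, Function.update_self ..⟩
  set T := sSup S
  have hT0 : 0 ≤ T := le_csSup hbdd h0
  have hTQ : T ≤ Q := csSup_le ⟨0, h0⟩ fun t ht => ht.1
  -- the left limit at `T` lets a partition ending just before `T` be extended to `T`
  have hTS : T ∈ S := by
    rcases hT0.eq_or_lt with h | hT
    · rwa [← h]
    obtain ⟨l, hl⟩ := hf.2 T hT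
    obtain ⟨δ, hδ, hl⟩ := Metric.tendsto_nhdsWithin_nhds.1 hl (ε / 2) (half_pos hε)
    obtain ⟨t, htS, htT⟩ := exists_lt_of_lt_csSup ⟨0, h0⟩ (sub_lt_self T hδ)
    rcases (le_csSup hbdd htS).eq_or_lt with h | h
    · rwa [h] at htS
    refine hext t htS T h hTQ (oscLtOn_of_forall_dist_lt fun u hu => hl hu.2 ?_)
    rw [Real.dist_eq, abs_of_neg (by linarith [hu.2])]
    linarith [hu.1]
  -- right continuity at `T` would extend it beyond `T` if `T < Q`
  have hTeq : T = Q := by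
    by_contra hne
    obtain ⟨δ, hδ, hc⟩ := Metric.continuousWithinAt_iff.1 (hf.1 T hT0) (ε / 2) (half_pos hε)
    have hlt : T < min (T + δ / 2) Q := lt_min (by linarith) (hTQ.lt_of_ne hne)
    have hmem : min (T + δ / 2) Q ∈ S := by
      refine hext T hTS _ hlt (min_le_right _ _) (oscLtOn_of_forall_dist_lt fun u hu => hc hu.1 ?_)
      rw [Real.dist_eq, abs_of_nonneg (by linarith [hu.1])]
      linarith [hu.2, min_le_left (T + δ / 2) Q]
    exact (le_csSup hbdd hmem).not_gt hlt
  obtain ⟨-, r, s, hp, hsr⟩ := hTS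
  exact ⟨r, s, hp, hsr.trans hTeq⟩

theorem OscPartition.exists_bound (hp : OscPartition f r s ε) :
    ∃ M, ∀ u ∈ Icc 0 (s r), ‖f u‖ ≤ M := by
  suffices ∀ k ≤ r, ∃ M, ∀ u ∈ Icc 0 (s k), ‖f u‖ ≤ M from this r le_rfl
  intro k hk
  induction k with
  | zero => exact ⟨‖f 0‖, fun u hu => by rw [hp.1] at hu; rw [hu.2.antisymm hu.1]⟩
  | succ k ih =>
    obtain ⟨M, hM⟩ := ih (by omega)
    refine ⟨max (max M (‖f (s k)‖ + ε)) ‖f (s (k + 1))‖, fun u hu => ?_⟩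
    rcases le_or_gt u (s k) with h | h
    · exact (hM u ⟨hu.1, h⟩).trans ((le_max_left _ _).trans (le_max_left _ _))
    rcases hu.2.lt_or_eq with h' | rfl
    · have := hp.2.2 k (by omega) u ⟨h.le, h'⟩ (s k) ⟨le_rfl, hp.2.1 k (by omega)⟩
      have := norm_le_norm_add_norm_sub' (f u) (f (s k))
      exact le_trans (by linarith) ((le_max_right _ _).trans (le_max_left _ _))
    · exact le_max_right _ _

theorem OscPartition.mono {ε' : ℝ} (hp : OscPartition f r s ε) (hεε' : ε ≤ ε') :
    OscPartition f r s ε' :=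
  ⟨hp.1, hp.2.1, fun k hk u hu v hv => (hp.2.2 k hk u hu v hv).trans_le hεε'⟩

theorem OscPartition.comp_timeChange {lam : ℝ → ℝ} (hmono : StrictMono lam)
    (hcont : Continuous lam) (h0 : lam 0 = 0) (hp : OscPartition f r s ε) {η : ℝ}
    (hfg : ∀ t ∈ Icc 0 (s r), ‖g (lam t) - f t‖ ≤ η) :
    OscPartition g r (lam ∘ s) (ε + 2 * η) := by
  refine ⟨by simp [hp.1, h0], fun k hk => hmono (hp.2.1 k hk), fun k hk => ?_⟩
  have himage := intermediate_value_Ico (hp.2.1 k hk).le hcont.continuousOn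
  have hsub : Ico (s k) (s (k + 1)) ⊆ Icc 0 (s r) := fun x hx =>
    ⟨(hp.nonneg hk.le).trans hx.1, hx.2.le.trans (hp.le_of_le hk le_rfl)⟩
  rintro _ hu' _ hv'
  obtain ⟨u, hu, rfl⟩ := himage hu'
  obtain ⟨v, hv, rfl⟩ := himage hv'
  calc ‖g (lam u) - g (lam v)‖ = ‖(g (lam u) - f u) + (f u - f v) - (g (lam v) - f v)‖ := by
        congr 1; abel
    _ ≤ ‖g (lam u) - f u‖ + ‖f u - f v‖ + ‖g (lam v) - f v‖ :=
        (norm_sub_le _ _).trans (by gcongr; exact norm_add_le _ _)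
    _ < ε + 2 * η := by linarith [hfg u (hsub hu), hfg v (hsub hv), hp.2.2 k hk u hu v hv]

end Partition

theorem forall_norm_le_of_timeChange {F : Type*} [NormedAddCommGroup F] {f g : ℝ → F}
    {lam : ℝ → ℝ} (hcont : Continuous lam) (h0 : lam 0 = 0) {T M η : ℝ} (hT : 0 ≤ T)
    (hfg : ∀ t ∈ Icc 0 T, ‖g (lam t) - f t‖ ≤ η) (hM : ∀ t ∈ Icc 0 T, ‖f t‖ ≤ M) :
    ∀ u ∈ Icc 0 (lam T), ‖g u‖ ≤ M + η := by
  intro u hu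
  obtain ⟨t, ht, rfl⟩ := intermediate_value_Icc hT hcont.continuousOn (h0.symm ▸ hu)
  linarith [norm_le_norm_add_norm_sub' (g (lam t)) (f t), hfg t ht, hM t ht]

theorem J1Tendsto.eventually_oscPartition {fn : ℕ → ℝ → EuclideanSpace ℝ (Fin d)}
    {f : ℝ → EuclideanSpace ℝ (Fin d)} (hJ : J1Tendsto fn f) (hf : Cadlag f) {Q ε : ℝ}
    (hQ : 0 ≤ Q) (hε : 0 < ε) :
    ∃ r M, ∀ᶠ n in atTop, ∃ s, OscPartition (fn n) r s ε ∧ Q ≤ s r ∧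
      ∀ u ∈ Icc 0 (s r), ‖fn n u‖ ≤ M := by
  obtain ⟨lam, hlam, hconv⟩ := hJ
  set η := min (ε / 3) (1 / 2)
  obtain ⟨r, s, hp, hsr⟩ :=
    hf.exists_oscPartition (by linarith : 0 ≤ Q + 1) (by positivity : 0 < ε / 3)
  obtain ⟨M, hM⟩ := hp.exists_bound
  obtain ⟨N, hN⟩ := hconv (Q + 1) (by linarith) η (by positivity)
  refine ⟨r, M + η, eventually_atTop.2 ⟨N, fun n hn => ?_⟩⟩
  obtain ⟨hmono, hcont, h0, -⟩ := hlam n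
  have hfg : ∀ t ∈ Icc 0 (s r), ‖fn n (lam n t) - f t‖ ≤ η := fun t ht =>
    (hN n hn t (hsr ▸ ht)).2
  refine ⟨lam n ∘ s, (hp.comp_timeChange hmono hcont h0 hfg).mono ?_, ?_,
    forall_norm_le_of_timeChange hcont h0 (hp.nonneg le_rfl) hfg hM⟩
  · linarith [min_le_left (ε / 3) (1 / 2)]
  · have := (abs_le.1 (hN n hn (Q + 1) ⟨by linarith, le_rfl⟩).1).1
    simp only [Function.comp_apply, hsr]
    linarith [min_le_right (ε / 3) (1 / 2)]

-- `M` bounds `‖y - a‖`; crossing a partition point, `x` moves by at most the increment of `y`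
-- (`≤ 2 M`) plus the penalization on the interval just left (`≤ B ^ 2 / ρ`).
noncomputable def penaltyBound (M ρ : ℝ) : ℕ → ℝ
  | 0 => M
  | k + 1 => penaltyBound M ρ k + 2 * M + penaltyBound M ρ k ^ 2 / ρ

section PenaltyBound

variable {M ρ : ℝ}

theorem penaltyBound_nonneg (hM : 0 ≤ M) (hρ : 0 ≤ ρ) : ∀ k, 0 ≤ penaltyBound M ρ k
  | 0 => hM
  | k + 1 => by
    have := penaltyBound_nonneg hM hρ k
    simp only [penaltyBound]
    positivity

theorem penaltyBound_monotone (hM : 0 ≤ M) (hρ : 0 ≤ ρ) : Monotone (penaltyBound M ρ) :=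
  monotone_nat_of_le_succ fun k => by
    simp only [penaltyBound]
    have : 0 ≤ penaltyBound M ρ k ^ 2 / ρ := by positivity
    linarith

end PenaltyBound

section Penalized

variable {K : Set (EuclideanSpace ℝ (Fin d))}
  {proj : EuclideanSpace ℝ (Fin d) → EuclideanSpace ℝ (Fin d)} {a : EuclideanSpace ℝ (Fin d)}
  {ρ c : ℝ} {x y : ℝ → EuclideanSpace ℝ (Fin d)} {s t : ℝ}

theorem PenalizedSol.intervalIntegrable (hsol : PenalizedSol proj c y x) (hs : 0 ≤ s)
    (ht : 0 ≤ t) : IntervalIntegrable (fun u => x u - proj (x u)) volume s t :=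
  (hsol.1 s hs).symm.trans (hsol.1 t ht)

theorem PenalizedSol.sub_eq (hsol : PenalizedSol proj c y x) (hs : 0 ≤ s) (ht : 0 ≤ t) :
    x t - x s = y t - y s - c • ∫ u in s..t, (x u - proj (x u)) := by
  rw [hsol.2 t ht, hsol.2 s hs,
    ← intervalIntegral.integral_interval_sub_left (hsol.1 t ht) (hsol.1 s hs), smul_sub]
  abel

theorem PenalizedSol.norm_sub_le_norm_sub_add (hsol : PenalizedSol proj c y x) (hc : 0 ≤ c)
    (hs : 0 ≤ s) (hst : s ≤ t) :
    ‖x t - x s‖ ≤ ‖y t - y s‖ + c * ∫ u in s..t, ‖x u - proj (x u)‖ := by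
  rw [hsol.sub_eq hs (hs.trans hst)]
  refine (norm_sub_le _ _).trans ?_
  rw [norm_smul, Real.norm_of_nonneg hc]
  gcongr
  exact intervalIntegral.norm_integral_le_integral_norm hst

theorem PenalizedSol.energy_estimate (hK : Convex ℝ K) (hproj : IsProjOn K proj) (hρ : 0 ≤ ρ)
    (hball : Metric.closedBall a ρ ⊆ K) (hc : 0 ≤ c) (hsol : PenalizedSol proj c y x)
    (hs : 0 ≤ s) (hst : s ≤ t) {b : EuclideanSpace ℝ (Fin d)} {β : ℝ}
    (hyb : ∀ u ∈ Icc s t, ‖y u - b‖ ≤ β) :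
    ‖x t - y t + b - a‖ ^ 2 + 2 * c * (ρ - β) * ∫ u in s..t, ‖x u - proj (x u)‖
      ≤ ‖x s - y s + b - a‖ ^ 2 := by
  set h := fun u => x u - proj (x u)
  set g := fun u => x u - y u + b - a
  have hh : IntervalIntegrable h volume s t := hsol.intervalIntegrable hs (hs.trans hst)
  have hw : IntervalIntegrable (fun u => (-c) • h u) volume s t := hh.smul (-c)
  have hg : ∀ u ∈ uIcc s t, g s + ∫ v in s..u, (-c) • h v = g u := by
    intro u hu
    rw [uIcc_of_le hst] at hu
    have := hsol.sub_eq hs (hs.trans hu.1)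
    rw [intervalIntegral.integral_smul, neg_smul]
    simp only [g]
    rw [show x u = x s + (x u - x s) by abel, this]
    abel
  have hgcont : ContinuousOn g (uIcc s t) := by
    refine ((continuousOn_const (c := g s)).add (intervalIntegral.continuousOn_primitive_interval'
      hw left_mem_uIcc)).congr fun u hu => ?_
    exact (hg u hu).symm
  -- `⟪h, g⟫ = ‖h‖² + ⟪h, proj x - a⟫ + ⟪h, b - y⟫ ≥ (ρ - β) ‖h‖`, using the ball around `a`
  have hpt : ∀ u ∈ Icc s t, ⟪(-c) • h u, g u⟫ ≤ -(c * (ρ - β)) * ‖h u‖ := by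
    intro u hu
    have hproj' := mul_norm_sub_le_inner_of_closedBall_subset_s7 hK hρ (hproj (x u)).1
      (hproj (x u)).2 hball
    have hb : -(‖h u‖ * β) ≤ ⟪h u, b - y u⟫ := by
      have := (abs_le.1 (abs_real_inner_le_norm (h u) (b - y u))).1
      rw [norm_sub_rev b (y u)] at this
      nlinarith [hyb u hu, norm_nonneg (h u)]
    have hsplit : g u = h u + (proj (x u) - a) + (b - y u) := by simp only [g, h]; abel
    rw [real_inner_smul_left, hsplit, inner_add_right, inner_add_right,
      real_inner_self_eq_norm_sq]
    nlinarith [sq_nonneg ‖h u‖]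
  have key := norm_add_intervalIntegral_sq hst hw (g s)
  rw [hg t (right_mem_uIcc), intervalIntegral.integral_congr fun u hu => by rw [hg u hu]] at key
  have hmono := intervalIntegral.integral_mono_on hst (hw.inner_of_continuousOn hgcont)
    (hh.norm.const_mul (-(c * (ρ - β)))) hpt
  rw [intervalIntegral.integral_const_mul] at hmono
  simp only [g, h] at key hmono ⊢
  nlinarith

theorem PenalizedSol.bound_on_oscInterval (hK : Convex ℝ K) (hproj : IsProjOn K proj)
    (hρ : 0 < ρ) (hball : Metric.closedBall a ρ ⊆ K) (hc : 0 ≤ c)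
    (hsol : PenalizedSol proj c y x) (hs : 0 ≤ s) (hst : s < t) (hosc : OscLtOn y s t (ρ / 2)) :
    (∀ u ∈ Ico s t, ‖x u - a‖ ≤ ‖x s - a‖ + ρ / 2) ∧
      c * ∫ u in s..t, ‖x u - proj (x u)‖ ≤ ‖x s - a‖ ^ 2 / ρ := by
  set φ := fun u => ∫ v in s..u, ‖x v - proj (x v)‖
  have hφ : ∀ u ∈ Ico s t, ‖x u - y u + y s - a‖ ^ 2 + c * ρ * φ u ≤ ‖x s - a‖ ^ 2 := by
    intro u hu
    have := hsol.energy_estimate hK hproj hρ.le hball hc hs hu.1 (b := y s) (β := ρ / 2)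
      fun v hv => (hosc v ⟨hv.1, hv.2.trans_lt hu.2⟩ s ⟨le_rfl, hst⟩).le
    rw [sub_add_cancel] at this
    linarith
  have hφ0 : ∀ u ∈ Ico s t, 0 ≤ c * ρ * φ u := fun u hu =>
    mul_nonneg (mul_nonneg hc hρ.le)
      (intervalIntegral.integral_nonneg hu.1 fun _ _ => norm_nonneg _)
  refine ⟨fun u hu => ?_, ?_⟩
  · have hg : ‖x u - y u + y s - a‖ ≤ ‖x s - a‖ :=
      (pow_le_pow_iff_left₀ (norm_nonneg _) (norm_nonneg _) two_ne_zero).1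
        (by linarith [hφ u hu, hφ0 u hu])
    calc ‖x u - a‖ = ‖(x u - y u + y s - a) + (y u - y s)‖ := by congr 1; abel
      _ ≤ ‖x u - y u + y s - a‖ + ‖y u - y s‖ := norm_add_le _ _
      _ ≤ ‖x s - a‖ + ρ / 2 := add_le_add hg (hosc u hu s ⟨le_rfl, hst⟩).le
  -- `φ` is continuous, so the bound on `[s, t)` persists at `t`
  have hcont : ContinuousOn (fun u => c * ρ * φ u) (Icc s t) := by
    have := intervalIntegral.continuousOn_primitive_interval'
      (hsol.intervalIntegrable hs (hs.trans hst.le)).norm left_mem_uIcc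
    rw [uIcc_of_le hst.le] at this
    exact continuousOn_const.mul this
  have ht : c * ρ * φ t ≤ ‖x s - a‖ ^ 2 := by
    refine ContinuousWithinAt.closure_le (f := fun u => c * ρ * φ u) (s := Ico s t)
      (by rw [closure_Ico hst.ne]; exact right_mem_Icc.2 hst.le)
      ((hcont t (right_mem_Icc.2 hst.le)).mono Ico_subset_Icc_self) continuousWithinAt_const
      fun u hu => by linarith [hφ u hu, sq_nonneg ‖x u - y u + y s - a‖]
  rw [le_div_iff₀ hρ]
  linarith

theorem PenalizedSol.bound_of_oscPartition (hK : Convex ℝ K) (hproj : IsProjOn K proj)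
    (hρ : 0 < ρ) (hball : Metric.closedBall a ρ ⊆ K) (hc : 0 ≤ c)
    (hsol : PenalizedSol proj c y x) {r : ℕ} {s : ℕ → ℝ} {M : ℝ}
    (hp : OscPartition y r s (ρ / 2)) (hM : ∀ u ∈ Icc 0 (s r), ‖y u - a‖ ≤ M) :
    (∀ t ∈ Icc 0 (s r), ‖x t - a‖ ≤ penaltyBound M ρ r + ρ / 2) ∧
      c * ∫ u in (0 : ℝ)..s r, ‖x u - proj (x u)‖ ≤ r * penaltyBound M ρ r ^ 2 / ρ := by
  set B := penaltyBound M ρ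
  have hM0 : 0 ≤ M := (norm_nonneg _).trans (hM 0 ⟨le_rfl, hp.nonneg le_rfl⟩)
  have hB0 := penaltyBound_nonneg hM0 hρ.le
  have hBmono := penaltyBound_monotone hM0 hρ.le
  have hyM : ∀ k ≤ r, ‖y (s k) - a‖ ≤ M := fun k hk =>
    hM _ ⟨hp.nonneg hk, hp.le_of_le hk le_rfl⟩
  suffices ∀ k ≤ r, ‖x (s k) - a‖ ≤ B k ∧ (∀ t ∈ Icc 0 (s k), ‖x t - a‖ ≤ B k + ρ / 2) ∧
      c * ∫ u in (0 : ℝ)..s k, ‖x u - proj (x u)‖ ≤ k * B k ^ 2 / ρ from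
    ⟨(this r le_rfl).2.1, (this r le_rfl).2.2⟩
  intro k hk
  induction k with
  | zero =>
    have hx0 : x 0 = y 0 := by simpa using hsol.2 0 le_rfl
    have hxa : ‖x 0 - a‖ ≤ B 0 := hx0 ▸ hp.1 ▸ hyM 0 (Nat.zero_le r)
    refine ⟨hp.1 ▸ hxa, fun t ht => ?_, by simp [hp.1]⟩
    rw [hp.1] at ht
    rw [ht.2.antisymm ht.1]
    linarith
  | succ k ih =>
    obtain ⟨hxk, hsup, hint⟩ := ih (by omega)
    have hsk := hp.nonneg (k := k) (by omega)
    have hlt := hp.2.1 k (by omega)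
    obtain ⟨hIco, hstep⟩ :=
      hsol.bound_on_oscInterval hK hproj hρ hball hc hsk hlt (hp.2.2 k (by omega))
    have hstep' : c * ∫ u in s k..s (k + 1), ‖x u - proj (x u)‖ ≤ B k ^ 2 / ρ :=
      hstep.trans (by gcongr)
    have hmono : B k ≤ B (k + 1) := hBmono k.le_succ
    have hjump : ‖x (s (k + 1)) - a‖ ≤ B (k + 1) := by
      have hx := hsol.norm_sub_le_norm_sub_add hc hsk hlt.le
      have hy : ‖y (s (k + 1)) - y (s k)‖ ≤ 2 * M := by
        have := norm_sub_le (y (s (k + 1)) - a) (y (s k) - a)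
        rw [sub_sub_sub_cancel_right] at this
        linarith [hyM (k + 1) hk, hyM k (by omega)]
      have := norm_le_norm_add_norm_sub' (x (s (k + 1)) - a) (x (s k) - a)
      rw [sub_sub_sub_cancel_right] at this
      simp only [B, penaltyBound]
      linarith
    refine ⟨hjump, fun t ht => ?_, ?_⟩
    · rcases le_or_gt t (s k) with h | h
      · linarith [hsup t ⟨ht.1, h⟩]
      rcases ht.2.lt_or_eq with h' | rfl
      · linarith [hIco t ⟨h.le, h'⟩]
      · linarith
    · have hint' := (hsol.intervalIntegrable (le_refl 0) hsk).norm
      rw [← intervalIntegral.integral_add_adjacent_intervals hint'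
        (hsol.intervalIntegrable hsk (hsk.trans hlt.le)).norm, mul_add]
      have : (k : ℝ) * B k ^ 2 / ρ + B k ^ 2 / ρ ≤ ((k + 1 : ℕ) : ℝ) * B (k + 1) ^ 2 / ρ := by
        rw [← add_div, Nat.cast_succ, add_one_mul]
        gcongr <;> exact hB0 k
      linarith

theorem exists_penalizedSol_bound (hK : Convex ℝ K) (hproj : IsProjOn K proj) (hρ : 0 < ρ)
    (hball : Metric.closedBall a ρ ⊆ K) {q : ℝ} (hq : 0 ≤ q) (r : ℕ) (M : ℝ) :
    ∃ C, ∀ (c : ℝ) (x y : ℝ → EuclideanSpace ℝ (Fin d)) (s : ℕ → ℝ), 0 ≤ c →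
      PenalizedSol proj c y x → OscPartition y r s (ρ / 2) → q ≤ s r →
      (∀ u ∈ Icc 0 (s r), ‖y u‖ ≤ M) →
      (∀ t ∈ Icc 0 q, ‖x t‖ ≤ C) ∧ c * ∫ u in (0 : ℝ)..q, ‖x u - proj (x u)‖ ≤ C := by
  set B := penaltyBound (M + ‖a‖) ρ r
  refine ⟨max (‖a‖ + B + ρ / 2) (r * B ^ 2 / ρ), fun c x y s hc hsol hp hqs hM => ?_⟩
  obtain ⟨hx, hint⟩ := hsol.bound_of_oscPartition hK hproj hρ hball hc hp fun u hu =>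
    (norm_sub_le _ _).trans (add_le_add_left (hM u hu) _)
  refine ⟨fun t ht => ?_, le_trans ?_ (le_max_right _ _)⟩
  · have := hx t ⟨ht.1, ht.2.trans hqs⟩
    have := norm_le_norm_add_norm_sub' (x t) a
    exact le_trans (by linarith) (le_max_left _ _)
  · refine le_trans (mul_le_mul_of_nonneg_left ?_ hc) hint
    exact intervalIntegral.integral_mono_interval le_rfl hq hqs
      (Eventually.of_forall fun _ => norm_nonneg _)
      (hsol.intervalIntegrable le_rfl (hq.trans hqs)).norm

end Penalized

theorem exists_forall_of_eventually {P : ℕ → ℝ → Prop}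
    (hmono : ∀ n ⦃C C' : ℝ⦄, C ≤ C' → P n C → P n C') (heach : ∀ n, ∃ C, P n C)
    (hev : ∃ C, ∀ᶠ n in atTop, P n C) : ∃ C, ∀ n, P n C := by
  choose f hf using heach
  obtain ⟨C, hC⟩ := hev
  obtain ⟨N, hN⟩ := eventually_atTop.1 hC
  refine ⟨max C (∑ n ∈ Finset.range N, |f n|), fun n => ?_⟩
  rcases lt_or_ge n N with h | h
  · refine hmono n ?_ (hf n)
    calc f n ≤ |f n| := le_abs_self _
      _ ≤ ∑ n ∈ Finset.range N, |f n| :=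
        Finset.single_le_sum (fun i _ => abs_nonneg (f i)) (Finset.mem_range.2 h)
      _ ≤ _ := le_max_right _ _
  · exact hmono n (le_max_left _ _) (hN n h)

theorem stmt7_general (d : ℕ) (D : Set (EuclideanSpace ℝ (Fin d)))
    (hD : IsOpen D) (hconv : Convex ℝ D) (hne : D.Nonempty)
    (proj : EuclideanSpace ℝ (Fin d) → EuclideanSpace ℝ (Fin d))
    (hproj : IsProjOn (closure D) proj)
    (yn : ℕ → ℝ → EuclideanSpace ℝ (Fin d)) (y : ℝ → EuclideanSpace ℝ (Fin d))
    (hyn : ∀ n, Cadlag (yn n)) (hy : Cadlag y)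
    (hJ1 : J1Tendsto yn y)
    (xn : ℕ → ℝ → EuclideanSpace ℝ (Fin d))
    (hxn : ∀ n : ℕ, PenalizedSol proj (n : ℝ) (yn n) (xn n)) :
    ∀ q : ℝ, 0 < q →
      (∃ C : ℝ, ∀ n : ℕ, ∀ t ∈ Set.Icc (0:ℝ) q, ‖xn n t‖ ≤ C) ∧
      (∃ C : ℝ, ∀ n : ℕ, (n : ℝ) * ∫ s in (0:ℝ)..q, ‖xn n s - proj (xn n s)‖ ≤ C) := by
  intro q hq
  obtain ⟨a, ha⟩ := hne
  obtain ⟨ρ, hρ, hball⟩ := Metric.nhds_basis_closedBall.mem_iff.1 (hD.mem_nhds ha)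
  have hbound := exists_penalizedSol_bound hconv.closure hproj hρ (hball.trans subset_closure)
    hq.le
  obtain ⟨C, hC⟩ := exists_forall_of_eventually
    (P := fun n C => (∀ t ∈ Icc 0 q, ‖xn n t‖ ≤ C) ∧
      (n : ℝ) * ∫ s in (0 : ℝ)..q, ‖xn n s - proj (xn n s)‖ ≤ C)
    (fun n C C' hCC' hC => ⟨fun t ht => (hC.1 t ht).trans hCC', hC.2.trans hCC'⟩)
    (fun n => by
      obtain ⟨r, s, hp, hsr⟩ := (hyn n).exists_oscPartition hq.le (half_pos hρ)
      obtain ⟨M, hM⟩ := hp.exists_bound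
      obtain ⟨C, hC⟩ := hbound r M
      exact ⟨C, hC n (xn n) (yn n) s n.cast_nonneg (hxn n) hp hsr.ge hM⟩)
    (by
      obtain ⟨r, M, hev⟩ := hJ1.eventually_oscPartition hy hq.le (half_pos hρ)
      obtain ⟨C, hC⟩ := hbound r M
      exact ⟨C, hev.mono fun n ⟨s, hp, hqs, hM⟩ =>
        hC n (xn n) (yn n) s n.cast_nonneg (hxn n) hp hqs hM⟩)
  exact ⟨⟨C, fun n => (hC n).1⟩, ⟨C, fun n => (hC n).2⟩⟩

/-- Theorem 2.3(i): uniform boundedness of penalized solutions and of the variations of the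
penalization terms, when `y^n → y` in the `J₁` topology. -/
theorem stmt7 (d : ℕ) (D : Set (EuclideanSpace ℝ (Fin d)))
    (hD : IsOpen D) (hconv : Convex ℝ D) (hne : D.Nonempty)
    (proj : EuclideanSpace ℝ (Fin d) → EuclideanSpace ℝ (Fin d))
    (hproj : IsProjOn (closure D) proj)
    (yn : ℕ → ℝ → EuclideanSpace ℝ (Fin d)) (y : ℝ → EuclideanSpace ℝ (Fin d))
    (hyn : ∀ n, Cadlag (yn n)) (hy : Cadlag y)
    (hyn0 : ∀ n, yn n 0 ∈ closure D)
    (hJ1 : J1Tendsto yn y)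
    (xn : ℕ → ℝ → EuclideanSpace ℝ (Fin d))
    (hxn : ∀ n : ℕ, PenalizedSol proj (n : ℝ) (yn n) (xn n)) :
    ∀ q : ℝ, 0 < q →
      (∃ C : ℝ, ∀ n : ℕ, ∀ t ∈ Set.Icc (0:ℝ) q, ‖xn n t‖ ≤ C) ∧
      (∃ C : ℝ, ∀ n : ℕ, (n : ℝ) * ∫ s in (0:ℝ)..q, ‖xn n s - proj (xn n s)‖ ≤ C) :=
  stmt7_general d D hD hconv hne proj hproj yn y hyn hy hJ1 xn hxn
end

section
/- For the solution x of the Skorokhod problem on a convex domain D associated with a càdlàg y with y_0 ∈ closure D, the jumps satisfy x_t = Π(x_{t-} + Δy_t) for every t > 0, where Π is the metric projection onto closure D. -/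
/-!
At a jump time `t` the reflection term jumps by `Δk_t = Δx_t - Δy_t`. Since `k` is the integral of
the normal field against `d|k|`, this jump is the atom `|k|({t}) • n_t`, and `|k|` charges `{t}`
only when `x_t ∈ ∂D`; so `Δk_t` is a nonnegative multiple of an inward normal at `x_t`. Writing
`z = x_{t-} + Δy_t = x_t - Δk_t`, every `w ∈ closure D` then satisfies `⟪z - x_t, w - x_t⟫ ≤ 0`,
which makes `x_t` the nearest point of `closure D` to `z`.
-/

open scoped RealInnerProductSpace
open MeasureTheory Set Filter

variable {d : ℕ}

open scoped Topology

theorem IsProjOn.apply_eq_of_inner_nonpos {C : Set (EuclideanSpace ℝ (Fin d))}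
    {proj : EuclideanSpace ℝ (Fin d) → EuclideanSpace ℝ (Fin d)} (hproj : IsProjOn C proj)
    {z p : EuclideanSpace ℝ (Fin d)} (hp : p ∈ C) (h : ∀ w ∈ C, ⟪z - p, w - p⟫ ≤ 0) :
    proj z = p := by
  obtain ⟨hqC, hmin⟩ := hproj z
  have hle : ‖z - proj z‖ ≤ ‖z - p‖ := by simpa only [dist_eq_norm] using hmin p hp
  have hexpand : ‖z - proj z‖ ^ 2 = ‖z - p‖ ^ 2 - 2 * ⟪z - p, proj z - p⟫ + ‖proj z - p‖ ^ 2 := by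
    rw [← norm_sub_sq_real, sub_sub_sub_cancel_right]
  have hzero : ‖proj z - p‖ = 0 := by
    nlinarith [h _ hqC, norm_nonneg (z - proj z), norm_nonneg (proj z - p)]
  exact sub_eq_zero.1 (norm_eq_zero.1 hzero)

section LeftLimit

variable {E : Type*} [NormedAddCommGroup E] {μ : Measure ℝ} {f : ℝ → E} {a t : ℝ}

theorem aestronglyMeasurable_restrict_Ioc_of_forall_lt
    (h : ∀ s < t, AEStronglyMeasurable f (μ.restrict (Ioc a s))) :
    AEStronglyMeasurable f (μ.restrict (Ioc a t)) := by
  obtain ⟨u, -, hu_lt, hu⟩ := exists_seq_strictMono_tendsto t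
  have hcover : Ioc a t ⊆ (⋃ n, Ioc a (u n)) ∪ {t} := by
    rintro s ⟨has, hst⟩
    rcases hst.lt_or_eq with hst | rfl
    · obtain ⟨n, hn⟩ := (hu.eventually (lt_mem_nhds hst)).exists
      exact Or.inl (mem_iUnion.2 ⟨n, has, hn.le⟩)
    · exact Or.inr rfl
  refine AEStronglyMeasurable.mono_set hcover ?_
  rw [aestronglyMeasurable_union_iff, aestronglyMeasurable_iUnion_iff, Measure.restrict_singleton]
  exact ⟨fun n => h _ (hu_lt n), aestronglyMeasurable_dirac.smul_measure _⟩

variable [NormedSpace ℝ E]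

theorem eventually_setIntegral_Ioc_eq_zero_nhdsLT
    (hf : ¬AEStronglyMeasurable f (μ.restrict (Ioc a t))) :
    ∀ᶠ s in 𝓝[<] t, ∫ u in Ioc a s, f u ∂μ = 0 := by
  obtain ⟨s₀, hs₀, hns₀⟩ : ∃ s₀ < t, ¬AEStronglyMeasurable f (μ.restrict (Ioc a s₀)) := by
    contrapose! hf
    exact aestronglyMeasurable_restrict_Ioc_of_forall_lt hf
  filter_upwards [Ioo_mem_nhdsLT hs₀] with s hs
  exact integral_undef fun hi => hns₀ (hi.aestronglyMeasurable.mono_set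
    (Ioc_subset_Ioc_right hs.1.le))

variable [CompleteSpace E]

theorem tendsto_setIntegral_Ioc_nhdsLT (hat : a < t) (hf : IntegrableOn f (Ioc a t) μ) :
    Tendsto (fun s => ∫ u in Ioc a s, f u ∂μ) (𝓝[<] t)
      (𝓝 (∫ u in Ioc a t, f u ∂μ - μ.real {t} • f t)) := by
  have hsplit : ∫ u in Ioc a t, f u ∂μ = ∫ u in Ioo a t, f u ∂μ + μ.real {t} • f t := by
    rw [← integral_singleton,
      ← setIntegral_union (disjoint_singleton_right.2 fun h => lt_irrefl t h.2)
      (measurableSet_singleton t) (hf.mono_set Ioo_subset_Ioc_self)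
      (hf.mono_set (singleton_subset_iff.2 (right_mem_Ioc.2 hat))), Ioo_union_right hat]
  have hlim : ∀ u, Tendsto (fun s => (Ioc a s).indicator f u) (𝓝[<] t)
      (𝓝 ((Ioo a t).indicator f u)) := by
    intro u
    refine tendsto_const_nhds.congr' ?_
    have hev : ∀ᶠ s in 𝓝[<] t, s < t ∧ (u < t → u < s) := by
      rcases lt_or_ge u t with hut | htu
      · filter_upwards [Ioo_mem_nhdsLT hut] with s hs using ⟨hs.2, fun _ => hs.1⟩
      · filter_upwards [self_mem_nhdsWithin] with s hs using ⟨hs, fun h => absurd h htu.not_gt⟩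
    filter_upwards [hev] with s ⟨hst, hus⟩
    have hmem : u ∈ Ioc a s ↔ u ∈ Ioo a t :=
      and_congr_right fun _ => ⟨fun h => h.trans_lt hst, fun h => (hus h).le⟩
    by_cases hu : u ∈ Ioo a t
    · rw [indicator_of_mem hu, indicator_of_mem (hmem.2 hu)]
    · rw [indicator_of_notMem hu, indicator_of_notMem (mt hmem.1 hu)]
  have hdom := tendsto_integral_filter_of_dominated_convergence (μ := μ.restrict (Ioc a t))
    (fun u => ‖f u‖) (.of_forall fun s => hf.aestronglyMeasurable.indicator measurableSet_Ioc)
    (.of_forall fun s => ae_of_all _ fun u => norm_indicator_le_norm_self _ _) hf.norm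
    (ae_of_all _ hlim)
  rw [setIntegral_indicator measurableSet_Ioo, inter_eq_right.2 Ioo_subset_Ioc_self] at hdom
  rw [hsplit, add_sub_cancel_right]
  refine hdom.congr' ?_
  filter_upwards [self_mem_nhdsWithin] with s hs
  rw [setIntegral_indicator measurableSet_Ioc, inter_eq_right.2 (Ioc_subset_Ioc_right hs.le)]

/-- If `f` is not a.e. strongly measurable the integrals are junk zeros, and then the jump vanishes
even at an atom of `μ`. -/
theorem setIntegral_Ioc_sub_eq_zero_or_eq_smul [IsLocallyFiniteMeasure μ] {C : ℝ} {L : E}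
    (hat : a < t) (hbound : ∀ᵐ u ∂μ.restrict (Ioc a t), ‖f u‖ ≤ C)
    (hL : Tendsto (fun s => ∫ u in Ioc a s, f u ∂μ) (𝓝[<] t) (𝓝 L)) :
    ∫ u in Ioc a t, f u ∂μ - L = 0 ∨ ∫ u in Ioc a t, f u ∂μ - L = μ.real {t} • f t := by
  by_cases hf : AEStronglyMeasurable f (μ.restrict (Ioc a t))
  · have hint : IntegrableOn f (Ioc a t) μ := .of_bound measure_Ioc_lt_top hf C hbound
    right
    rw [tendsto_nhds_unique hL (tendsto_setIntegral_Ioc_nhdsLT hat hint), sub_sub_cancel]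
  · have hL0 : L = 0 := tendsto_nhds_unique hL <| tendsto_const_nhds.congr' <|
      (eventually_setIntegral_Ioc_eq_zero_nhdsLT hf).mono fun _ h => h.symm
    left
    rw [hL0, integral_undef fun hi => hf hi.aestronglyMeasurable, sub_zero]

end LeftLimit

theorem IsSkorokhodSol.inner_jump_nonneg {D : Set (EuclideanSpace ℝ (Fin d))}
    {y x : ℝ → EuclideanSpace ℝ (Fin d)} (hx : IsSkorokhodSol D y x) {t : ℝ} (ht : 0 < t)
    {ylim xlim : EuclideanSpace ℝ (Fin d)} (hylim : Tendsto y (𝓝[<] t) (𝓝 ylim))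
    (hxlim : Tendsto x (𝓝[<] t) (𝓝 xlim)) :
    ∀ w ∈ closure D, 0 ≤ ⟪x t - y t - (xlim - ylim), w - x t⟫ := by
  obtain ⟨k, v, nv, hxyk, -, -, -, hkint, hnormal, hvfr⟩ := hx
  have hfr : ∀ᵐ s ∂v.measure, 0 ≤ s → x s ∈ frontier D := by
    rw [ae_iff]
    simpa only [Classical.not_imp] using hvfr
  have hbound : ∀ᵐ s ∂v.measure.restrict (Ioc 0 t), ‖nv s‖ ≤ 1 := by
    rw [ae_restrict_iff' measurableSet_Ioc]
    filter_upwards [hfr] with s hs hst using (hnormal s hst.1.le (hs hst.1.le)).1.le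
  have hk : Tendsto (fun s => ∫ u in Ioc 0 s, nv u ∂v.measure) (𝓝[<] t) (𝓝 (xlim - ylim)) := by
    refine (hxlim.sub hylim).congr' ?_
    filter_upwards [Ioo_mem_nhdsLT ht] with s hs
    rw [← hkint s hs.1.le, hxyk s hs.1.le, add_sub_cancel_left]
  intro w hw
  rw [show x t - y t = ∫ u in Ioc 0 t, nv u ∂v.measure by
    rw [hxyk t ht.le, add_sub_cancel_left, hkint t ht.le]]
  rcases setIntegral_Ioc_sub_eq_zero_or_eq_smul ht hbound hk with hjump | hjump
  · rw [hjump, inner_zero_left]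
  · rw [hjump, real_inner_smul_left]
    by_cases hatom : v.measure {t} = 0
    · simp [measureReal_def, hatom]
    · have hxt : x t ∈ frontier D := by
        by_contra hxt
        refine hatom (measure_mono_null (fun s hs => ?_) hvfr)
        rw [mem_singleton_iff.1 hs]
        exact ⟨ht.le, hxt⟩
      rw [real_inner_comm]
      exact mul_nonneg measureReal_nonneg ((hnormal t ht.le hxt).2 w hw)

theorem stmt12_general (d : ℕ) (D : Set (EuclideanSpace ℝ (Fin d)))
    (proj : EuclideanSpace ℝ (Fin d) → EuclideanSpace ℝ (Fin d))
    (hproj : IsProjOn (closure D) proj)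
    (y x : ℝ → EuclideanSpace ℝ (Fin d))
    (hx : IsSkorokhodSol D y x)
    (t : ℝ) (ht : 0 < t)
    (ylim xlim : EuclideanSpace ℝ (Fin d))
    (hylim : Filter.Tendsto y (nhdsWithin t (Set.Iio t)) (nhds ylim))
    (hxlim : Filter.Tendsto x (nhdsWithin t (Set.Iio t)) (nhds xlim)) :
    x t = proj (xlim + (y t - ylim)) := by
  have hxt : x t ∈ closure D := by
    obtain ⟨-, -, -, -, hxD, -⟩ := hx
    exact hxD t ht.le
  refine (hproj.apply_eq_of_inner_nonpos hxt fun w hw => ?_).symm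
  have hjump := hx.inner_jump_nonneg ht hylim hxlim w hw
  rw [show xlim + (y t - ylim) - x t = -(x t - y t - (xlim - ylim)) by abel, inner_neg_left]
  linarith

/-- Jump structure of the solution of the Skorokhod problem: `x_t = Π(x_{t-} + Δy_t)`. -/
theorem stmt12 (d : ℕ) (D : Set (EuclideanSpace ℝ (Fin d)))
    (hD : IsOpen D) (hconv : Convex ℝ D) (hne : D.Nonempty)
    (proj : EuclideanSpace ℝ (Fin d) → EuclideanSpace ℝ (Fin d))
    (hproj : IsProjOn (closure D) proj)
    (y x : ℝ → EuclideanSpace ℝ (Fin d))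
    (hy : Cadlag y) (hy0 : y 0 ∈ closure D)
    (hx : IsSkorokhodSol D y x)
    (t : ℝ) (ht : 0 < t)
    (ylim xlim : EuclideanSpace ℝ (Fin d))
    (hylim : Filter.Tendsto y (nhdsWithin t (Set.Iio t)) (nhds ylim))
    (hxlim : Filter.Tendsto x (nhdsWithin t (Set.Iio t)) (nhds xlim)) :
    x t = proj (xlim + (y t - ylim)) :=
  stmt12_general d D proj hproj y x hx t ht ylim xlim hylim hxlim
end

section
/- Let {(y^n, z^n)} be relatively compact in the Skorokhod J₁ topology on D([0,∞), ℝ^{2d}) with y^n_0 ∈ closure D, and let x^n solve the penalized equation x^n_t = y^n_t - n∫_0^t (x^n_s - Π(x^n_s)) ds. Then for every q ≥ 0, lim_{δ↓0} limsup_{n→∞} ω̄''_{(x^n, z^n)}(δ, q) = 0. -/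
open scoped RealInnerProductSpace
open MeasureTheory Set Filter

variable {d : ℕ}

/-!
Write `k = x - y`, so that `k' = -c (x - Π x)`. Everything rests on the energy inequality for
`‖x - y + y w - b‖²`, the squared distance from `b` of the solution with its input frozen at
time `w`. Taking for `b` the centre of a ball in `closure D`, it bounds the variation
`c ∫ ‖x - Π x‖` on every interval where `y` oscillates less than the radius, hence uniformly
on `[0, q]` along a `J₁`-convergent sequence, whose partitions into cells of small oscillation
have uniformly long cells. Taking `b ∈ closure D`, it shows that once `x` is close to
`closure D` it stays close while `y` barely moves, and that `x` then barely moves itself. As the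
variation stays bounded while `c → ∞`, `x` comes close to `closure D` in every time window of
fixed length, so inside a cell where `y` and `z` are almost constant `x` can only move near the
start of the cell, that is, not just before `z` moves. Relative compactness reduces the claim to
`J₁`-convergent subsequences.
-/

open Topology

section Energy

variable {E : Type*} [NormedAddCommGroup E] [InnerProductSpace ℝ E]
  {f : ℝ → E} {s u : ℝ}

lemma continuousOn_setIntegral_Ioc (hf : IntegrableOn f (Ioc s u)) :
    ContinuousOn (fun v => ∫ w in Ioc s v, f w) (Icc s u) :=
  intervalIntegral.continuousOn_primitive ((integrableOn_Icc_iff_integrableOn_Ioc (by simp)).2 hf)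

lemma MeasureTheory.IntegrableOn.inner_continuousOn {G : ℝ → E} (hf : IntegrableOn f (Ioc s u))
    (hG : ContinuousOn G (Icc s u)) : IntegrableOn (fun v => ⟪f v, G v⟫) (Ioc s u) := by
  obtain ⟨M, hM⟩ := isCompact_Icc.exists_bound_of_continuousOn hG
  refine Integrable.mono' (hf.norm.const_mul M)
    (hf.aestronglyMeasurable.inner
      ((hG.mono Ioc_subset_Icc_self).aestronglyMeasurable measurableSet_Ioc)) ?_
  filter_upwards [ae_restrict_mem measurableSet_Ioc] with v hv
  refine (norm_inner_le_norm _ _).trans ?_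
  rw [mul_comm]
  gcongr
  exact hM v (Ioc_subset_Icc_self hv)

lemma integral_inner_left [CompleteSpace E] {ν : Measure ℝ} (hf : Integrable f ν) (c : E) :
    ∫ v, ⟪f v, c⟫ ∂ν = ⟪∫ v, f v ∂ν, c⟫ := by
  simp_rw [real_inner_comm c]
  exact integral_inner hf c

/-- Fubini on the triangle `s < v < w ≤ u`. -/
lemma integral_inner_integral_Ioc_swap [CompleteSpace E] (hf : IntegrableOn f (Ioc s u)) :
    ∫ v in Ioc s u, ⟪f v, ∫ w in Ioc v u, f w⟫ = ∫ w in Ioc s u, ⟪∫ v in Ioc s w, f v, f w⟫ := by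
  set K : ℝ × ℝ → ℝ := {p | p.1 < p.2}.indicator fun p => ⟪f p.1, f p.2⟫
  have hK : Integrable K ((volume.restrict (Ioc s u)).prod (volume.restrict (Ioc s u))) := by
    refine Integrable.mono' (hf.norm.mul_prod hf.norm)
      ((hf.aestronglyMeasurable.comp_fst.inner hf.aestronglyMeasurable.comp_snd).indicator
        (isOpen_lt continuous_fst continuous_snd).measurableSet) (Eventually.of_forall fun p => ?_)
    by_cases hp : p.1 < p.2
    · simpa [K, hp] using norm_inner_le_norm (𝕜 := ℝ) (f p.1) (f p.2)
    · simp only [K, indicator_of_notMem (show p ∉ {p : ℝ × ℝ | p.1 < p.2} from hp), norm_zero]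
      positivity
  have hswap := integral_integral_swap (f := fun v w => K (v, w)) hK
  have hrow : ∀ v ∈ Ioc s u, ∫ w in Ioc s u, K (v, w) = ⟪f v, ∫ w in Ioc v u, f w⟫ := by
    intro v hv
    have : (fun w => K (v, w)) = (Ioi v).indicator fun w => ⟪f v, f w⟫ := by
      ext w; simp [K, indicator_apply]
    rw [this, setIntegral_indicator measurableSet_Ioi, Ioc_inter_Ioi, max_eq_right hv.1.le,
      integral_inner (𝕜 := ℝ) (hf.mono_set (Ioc_subset_Ioc_left hv.1.le))]
  have hcol : ∀ w ∈ Ioc s u, ∫ v in Ioc s u, K (v, w) = ⟪∫ v in Ioc s w, f v, f w⟫ := by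
    intro w hw
    have : (fun v => K (v, w)) = (Iio w).indicator fun v => ⟪f v, f w⟫ := by
      ext v; simp [K, indicator_apply]
    have hsub : Ioc s u ∩ Iio w = Ioo s w := by
      ext v; simp only [mem_inter_iff, mem_Ioc, mem_Iio, mem_Ioo]
      constructor
      · rintro ⟨⟨h1, -⟩, h2⟩; exact ⟨h1, h2⟩
      · rintro ⟨h1, h2⟩; exact ⟨⟨h1, h2.le.trans hw.2⟩, h2⟩
    rw [this, setIntegral_indicator measurableSet_Iio, hsub, ← integral_Ioc_eq_integral_Ioo,
      integral_inner_left (hf.mono_set (Ioc_subset_Ioc_right hw.2))]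
  rwa [setIntegral_congr_fun measurableSet_Ioc hrow,
    setIntegral_congr_fun measurableSet_Ioc hcol] at hswap

lemma norm_integral_Ioc_add_sq [CompleteSpace E] (hf : IntegrableOn f (Ioc s u)) (c : E) :
    ‖(∫ v in Ioc s u, f v) + c‖ ^ 2
      = ‖c‖ ^ 2 + 2 * ∫ v in Ioc s u, ⟪f v, (∫ w in Ioc s v, f w) + c⟫ := by
  set F : ℝ → E := fun v => ∫ w in Ioc s v, f w
  have hFc : ContinuousOn F (Icc s u) := continuousOn_setIntegral_Ioc hf
  have hincr : ∀ v ∈ Ioc s u, F u - F v = ∫ w in Ioc v u, f w := fun v hv => by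
    rw [sub_eq_iff_eq_add', ← setIntegral_union (Ioc_disjoint_Ioc_of_le le_rfl) measurableSet_Ioc
      (hf.mono_set (Ioc_subset_Ioc_right hv.2)) (hf.mono_set (Ioc_subset_Ioc_left hv.1.le)),
      Ioc_union_Ioc_eq_Ioc hv.1.le hv.2]
  have hIF : IntegrableOn (fun v => ⟪f v, F v⟫) (Ioc s u) := hf.inner_continuousOn hFc
  have hIFu : IntegrableOn (fun v => ⟪f v, F u - F v⟫) (Ioc s u) :=
    hf.inner_continuousOn (continuousOn_const.sub hFc)
  have hsq : ‖F u‖ ^ 2 = 2 * ∫ v in Ioc s u, ⟪f v, F v⟫ := by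
    have hswap : ∫ v in Ioc s u, ⟪f v, F u - F v⟫ = ∫ v in Ioc s u, ⟪f v, F v⟫ := by
      rw [setIntegral_congr_fun measurableSet_Ioc fun v hv => by rw [hincr v hv],
        integral_inner_integral_Ioc_swap hf]
      exact integral_congr_ae (Eventually.of_forall fun v => real_inner_comm _ _)
    calc ‖F u‖ ^ 2 = ∫ v in Ioc s u, ⟪f v, F v⟫ + ⟪f v, F u - F v⟫ := by
          rw [← real_inner_self_eq_norm_sq, ← integral_inner_left hf]
          simp_rw [← inner_add_right, add_sub_cancel]
      _ = 2 * ∫ v in Ioc s u, ⟪f v, F v⟫ := by rw [integral_add hIF hIFu, hswap]; ring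
  simp_rw [inner_add_right]
  rw [integral_add hIF (hf.inner_const c), integral_inner_left hf, norm_add_sq_real, hsq]
  ring

/-- The energy inequality for `‖P - b‖²` along `P' = -c f`. -/
lemma sq_norm_sub_le_of_le_inner [CompleteSpace E] {P : ℝ → E} {b : E} {B : ℝ → ℝ}
    {c σ τ : ℝ} (hστ : σ ≤ τ) (hf : IntegrableOn f (Ioc σ τ)) (hc : 0 ≤ c)
    (hP : ∀ v ∈ Icc σ τ, P v = P σ - c • ∫ w in Ioc σ v, f w)
    (hB : IntegrableOn B (Ioc σ τ)) (hBle : ∀ v ∈ Ioo σ τ, B v ≤ ⟪f v, P v - b⟫) :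
    ‖P τ - b‖ ^ 2 ≤ ‖P σ - b‖ ^ 2 - 2 * c * ∫ v in Ioc σ τ, B v := by
  have hPv : ∀ v ∈ Icc σ τ, (∫ w in Ioc σ v, (-c) • f w) + (P σ - b) = P v - b := fun v hv => by
    rw [integral_smul, hP v hv]; module
  have hPc : ContinuousOn (fun v => P v - b) (Icc σ τ) := by
    have : ContinuousOn (fun v => (P σ - c • ∫ w in Ioc σ v, f w) - b) (Icc σ τ) :=
      (continuousOn_const.sub ((continuousOn_setIntegral_Ioc hf).const_smul c)).sub
        continuousOn_const
    exact this.congr fun v hv => by rw [hP v hv]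
  have hid := norm_integral_Ioc_add_sq (f := fun v => (-c) • f v) (hf.smul (-c)) (P σ - b)
  rw [hPv τ (right_mem_Icc.2 hστ), setIntegral_congr_fun measurableSet_Ioc fun v hv => by
    rw [hPv v (Ioc_subset_Icc_self hv), real_inner_smul_left], integral_const_mul] at hid
  have hmono : ∫ v in Ioc σ τ, B v ≤ ∫ v in Ioc σ τ, ⟪f v, P v - b⟫ := by
    rw [integral_Ioc_eq_integral_Ioo, integral_Ioc_eq_integral_Ioo]
    exact setIntegral_mono_on (hB.mono_set Ioo_subset_Ioc_self)
      ((hf.inner_continuousOn hPc).mono_set Ioo_subset_Ioc_self) measurableSet_Ioo hBle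
  nlinarith [mul_le_mul_of_nonneg_left hmono hc]

lemma exists_mem_Ioc_le_of_integral_le {g : ℝ → ℝ} {a b M : ℝ} (hab : a < b)
    (hg : IntegrableOn g (Ioc a b)) (h : ∫ v in Ioc a b, g v ≤ (b - a) * M) :
    ∃ v ∈ Ioc a b, g v ≤ M := by
  obtain ⟨v, hvN, hv⟩ := exists_notMem_null_le_average (μ := volume.restrict (Ioc a b))
    (N := (Ioc a b)ᶜ) (by simp [hab]) hg (by simp)
  refine ⟨v, not_not.1 hvN, hv.trans ?_⟩
  rw [setAverage_eq, smul_eq_mul, Real.volume_real_Ioc_of_le hab.le,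
    inv_mul_le_iff₀ (sub_pos.2 hab)]
  exact h

end Energy

section Oscillation

variable {F : Type*} [NormedAddCommGroup F]

def OscLeOn (f : ℝ → F) (S : Set ℝ) (η : ℝ) : Prop :=
  ∀ v ∈ S, ∀ v' ∈ S, ‖f v - f v'‖ ≤ η

lemma OscLeOn.mono {f : ℝ → F} {S T : Set ℝ} {η : ℝ} (h : OscLeOn f T η) (hST : S ⊆ T) :
    OscLeOn f S η :=
  fun v hv v' hv' => h v (hST hv) v' (hST hv')

lemma OscLeOn.fst {G : Type*} [NormedAddCommGroup G] {f : ℝ → F × G} {S : Set ℝ} {η : ℝ}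
    (h : OscLeOn f S η) : OscLeOn (fun t => (f t).1) S η :=
  fun v hv v' hv' => (norm_fst_le _).trans (h v hv v' hv')

lemma OscLeOn.snd {G : Type*} [NormedAddCommGroup G] {f : ℝ → G × F} {S : Set ℝ} {η : ℝ}
    (h : OscLeOn f S η) : OscLeOn (fun t => (f t).2) S η :=
  fun v hv v' hv' => (norm_snd_le _).trans (h v hv v' hv')

lemma oscLeOn_of_dist_lt {f : ℝ → F} {S : Set ℝ} {η : ℝ} (p : F)
    (h : ∀ v ∈ S, dist (f v) p < η / 2) : OscLeOn f S η := fun v hv v' hv' => by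
  rw [← dist_eq_norm]
  linarith [dist_triangle_right (f v) (f v') p, h v hv, h v' hv']

lemma OscLeOn.of_dist_le {f g : ℝ → F} {S : Set ℝ} {η e η' : ℝ} (h : OscLeOn g S η)
    (hfg : ∀ v ∈ S, dist (f v) (g v) ≤ e) (hη : η + 2 * e ≤ η') : OscLeOn f S η' :=
  fun v hv v' hv' => by
    have := h v hv v' hv'
    rw [← dist_eq_norm] at this ⊢
    linarith [dist_triangle4 (f v) (g v) (g v') (f v'), hfg v hv, hfg v' hv',
      dist_comm (g v') (f v')]

lemma OscLeOn.of_comp {f : ℝ → F} {lam : ℝ → ℝ} (hmono : StrictMono lam) (hcont : Continuous lam)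
    {a b η : ℝ} (h : OscLeOn (f ∘ lam) (Ico a b) η) : OscLeOn f (Ico (lam a) (lam b)) η := by
  have hsurj : ∀ z ∈ Ico (lam a) (lam b), ∃ t ∈ Ico a b, lam t = z := fun z hz => by
    obtain ⟨t, ht, rfl⟩ := intermediate_value_Icc (hmono.lt_iff_lt.1 (hz.1.trans_lt hz.2)).le
      hcont.continuousOn ⟨hz.1, hz.2.le⟩
    exact ⟨t, ⟨ht.1, hmono.lt_iff_lt.1 hz.2⟩, rfl⟩
  intro v hv v' hv'
  obtain ⟨t, ht, rfl⟩ := hsurj v hv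
  obtain ⟨t', ht', rfl⟩ := hsurj v' hv'
  exact h t ht t' ht'

variable {f : ℝ → F} {η : ℝ}

lemma exists_oscLeOn_Ico_of_continuousWithinAt {t : ℝ} (hf : ContinuousWithinAt f (Ici t) t)
    (hη : 0 < η) : ∃ h > 0, OscLeOn f (Ico t (t + h)) η := by
  obtain ⟨h, hh, hclose⟩ := Metric.continuousWithinAt_iff.1 hf (η / 2) (half_pos hη)
  refine ⟨h, hh, oscLeOn_of_dist_lt (f t) fun v hv => hclose hv.1 ?_⟩
  rw [Real.dist_eq, abs_lt]
  constructor <;> linarith [hv.1, hv.2]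

lemma exists_oscLeOn_Ioo_of_tendsto {t : ℝ} {l : F} (hf : Tendsto f (𝓝[<] t) (𝓝 l))
    (hη : 0 < η) : ∃ h > 0, OscLeOn f (Ioo (t - h) t) η := by
  obtain ⟨h, hh, hclose⟩ := Metric.tendsto_nhdsWithin_nhds.1 hf (η / 2) (half_pos hη)
  refine ⟨h, hh, oscLeOn_of_dist_lt l fun v hv => hclose hv.2 ?_⟩
  rw [Real.dist_eq, abs_lt]
  constructor <;> linarith [hv.1, hv.2]

end Oscillation

section Partition

variable {F : Type*} [NormedAddCommGroup F] {f : ℝ → F} {η : ℝ}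

def HasOscPartition (f : ℝ → F) (η T : ℝ) : Prop :=
  ∃ (m : ℕ) (c : ℕ → ℝ), c 0 = 0 ∧ c m = T ∧
    ∀ i < m, c i < c (i + 1) ∧ OscLeOn f (Ico (c i) (c (i + 1))) η

lemma hasOscPartition_zero : HasOscPartition f η 0 :=
  ⟨0, fun _ => 0, rfl, rfl, by simp⟩

lemma HasOscPartition.extend {t t' : ℝ} (h : HasOscPartition f η t) (htt' : t < t')
    (hcell : OscLeOn f (Ico t t') η) : HasOscPartition f η t' := by
  obtain ⟨m, c, hc0, hcm, hcells⟩ := h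
  refine ⟨m + 1, fun i => if i ≤ m then c i else t', by simp [hc0], by simp, fun i hi => ?_⟩
  rcases Nat.lt_or_ge i m with him | him
  · simpa [him.le, Nat.succ_le_of_lt him] using hcells i him
  · obtain rfl : i = m := by omega
    simpa [hcm] using ⟨htt', hcell⟩

/-- The supremum of the admissible right endpoints is admissible by the left limit there, and
equals `T` by right continuity. -/
lemma hasOscPartition_of_cadlag (hr : ∀ t, 0 ≤ t → ContinuousWithinAt f (Ici t) t)
    (hl : ∀ t, 0 < t → ∃ l, Tendsto f (𝓝[<] t) (𝓝 l)) {T : ℝ} (hT : 0 ≤ T) (hη : 0 < η) :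
    HasOscPartition f η T := by
  set S : Set ℝ := {t | t ≤ T ∧ HasOscPartition f η t}
  have h0S : (0 : ℝ) ∈ S := ⟨hT, hasOscPartition_zero⟩
  have hbdd : BddAbove S := ⟨T, fun t ht => ht.1⟩
  set τ := sSup S
  have hτ0 : 0 ≤ τ := le_csSup hbdd h0S
  have hτT : τ ≤ T := csSup_le ⟨0, h0S⟩ fun t ht => ht.1
  have hτS : HasOscPartition f η τ := by
    rcases hτ0.eq_or_lt with hτ | hτ
    · rw [← hτ]; exact hasOscPartition_zero
    obtain ⟨l, hlim⟩ := hl τ hτ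
    obtain ⟨γ, hγ, hosc⟩ := exists_oscLeOn_Ioo_of_tendsto hlim hη
    obtain ⟨t, htS, hγt⟩ := exists_lt_of_lt_csSup ⟨0, h0S⟩ (sub_lt_self τ hγ)
    rcases (le_csSup hbdd htS).eq_or_lt with htτ | htτ
    · subst htτ; exact htS.2
    · exact htS.2.extend htτ (hosc.mono fun v hv => ⟨hγt.trans_le hv.1, hv.2⟩)
  rcases hτT.eq_or_lt with hτT | hτT
  · exact hτT ▸ hτS
  obtain ⟨h, hh, hosc⟩ := exists_oscLeOn_Ico_of_continuousWithinAt (hr τ hτ0) hη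
  have hτt : τ < min T (τ + h / 2) := lt_min hτT (by linarith)
  have hmem : min T (τ + h / 2) ∈ S := ⟨min_le_left _ _, hτS.extend hτt
    (hosc.mono (Ico_subset_Ico_right ((min_le_right _ _).trans (by linarith))))⟩
  exact absurd (le_csSup hbdd hmem) hτt.not_ge

lemma exists_mem_Ico_of_mem_Ico {c : ℕ → ℝ} {m : ℕ} {v : ℝ} (hv : v ∈ Ico (c 0) (c m)) :
    ∃ i < m, v ∈ Ico (c i) (c (i + 1)) := by
  induction m with
  | zero => exact absurd hv.2 (not_lt.2 hv.1)
  | succ k ih =>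
    rcases lt_or_ge v (c k) with h | h
    · obtain ⟨i, hi, hvi⟩ := ih ⟨hv.1, h⟩
      exact ⟨i, by omega, hvi⟩
    · exact ⟨k, by omega, h, hv.2⟩

lemma exists_pos_le_sub_of_lt_succ {c : ℕ → ℝ} {m : ℕ} (h : ∀ i < m, c i < c (i + 1)) :
    ∃ G > 0, ∀ i < m, G ≤ c (i + 1) - c i := by
  rcases Nat.eq_zero_or_pos m with rfl | hm
  · exact ⟨1, one_pos, by simp⟩
  obtain ⟨j, hj, hmin⟩ := (Finset.range m).exists_min_image (fun i => c (i + 1) - c i)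
    ⟨0, Finset.mem_range.2 hm⟩
  exact ⟨_, sub_pos.2 (h j (Finset.mem_range.1 hj)), fun i hi => hmin i (Finset.mem_range.2 hi)⟩

lemma monotoneOn_Iic_of_le_succ_s13 {c : ℕ → ℝ} {m : ℕ} (h : ∀ i < m, c i ≤ c (i + 1)) :
    MonotoneOn c (Iic m) :=
  monotoneOn_of_le_succ ordConnected_Iic fun i _ _ hi => by
    simpa using h i (by simpa [Nat.succ_le_iff] using hi)

lemma min_norm_sub_le_of_cells {x z : ℝ → F} {c : ℕ → ℝ} {m : ℕ} {G η B s u t : ℝ}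
    (hc0 : c 0 = 0)
    (hcells : ∀ i < m, c i + G ≤ c (i + 1) ∧ OscLeOn z (Ico (c i) (c (i + 1))) η) (hηB : η ≤ B)
    (hx : ∀ i < m, c i + G / 2 ≤ s → u < c (i + 1) → ‖x u - x s‖ ≤ B)
    (hs : 0 ≤ s) (hsu : s ≤ u) (hut : u ≤ t) (hum : u < c m) (hts : t - s < G / 2) :
    min ‖x u - x s‖ ‖z t - z u‖ ≤ B := by
  obtain ⟨i, hi, hui⟩ := exists_mem_Ico_of_mem_Ico (c := c) ⟨hc0 ▸ hs.trans hsu, hum⟩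
  rcases lt_or_ge t (c (i + 1)) with ht | ht
  · exact (min_le_right _ _).trans (((hcells i hi).2 t ⟨hui.1.trans hut, ht⟩ u hui).trans hηB)
  · exact (min_le_left _ _).trans (hx i hi (by linarith [(hcells i hi).1]) hui.2)

end Partition

section Skorokhod

variable {F : Type*} [NormedAddCommGroup F]

lemma cadlag_comp_of_strictMono {f : ℝ → F} {lam : ℝ → ℝ} (hmono : StrictMono lam)
    (hcont : Continuous lam) (h0 : lam 0 = 0)
    (hr : ∀ t, 0 ≤ t → ContinuousWithinAt f (Ici t) t)
    (hl : ∀ t, 0 < t → ∃ l, Tendsto f (𝓝[<] t) (𝓝 l)) :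
    (∀ t, 0 ≤ t → ContinuousWithinAt (f ∘ lam) (Ici t) t) ∧
      ∀ t, 0 < t → ∃ l, Tendsto (f ∘ lam) (𝓝[<] t) (𝓝 l) := by
  refine ⟨fun t ht => ?_, fun t ht => ?_⟩
  · exact (hr (lam t) (h0 ▸ hmono.monotone ht)).comp hcont.continuousWithinAt
      fun v hv => hmono.monotone hv
  · obtain ⟨l, hlim⟩ := hl (lam t) (h0 ▸ hmono ht)
    exact ⟨l, hlim.comp (hcont.continuousWithinAt.tendsto_nhdsWithin fun v hv => hmono hv)⟩

/-- A partition into cells of oscillation `χ / 2` for one time-changed term is transported by the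
time changes of all later terms: cell lengths stay above half the minimal one, and oscillations
grow by at most `χ / 2` since all terms are uniformly close to the limit. -/
lemma J1Tendsto.exists_uniform_partition {fn : ℕ → ℝ → F} {w : ℝ → F} (hJ : J1Tendsto fn w)
    (hr : ∀ n t, 0 ≤ t → ContinuousWithinAt (fn n) (Ici t) t)
    (hl : ∀ n t, 0 < t → ∃ l, Tendsto (fn n) (𝓝[<] t) (𝓝 l)) {T χ : ℝ} (hT : 0 ≤ T)
    (hχ : 0 < χ) :
    ∃ (m : ℕ) (δ Y : ℝ) (K : ℕ), 0 < δ ∧ ∀ n ≥ K, ∃ c : ℕ → ℝ, c 0 = 0 ∧ T ≤ c m ∧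
      (∀ i < m, c i + δ ≤ c (i + 1) ∧ OscLeOn (fn n) (Ico (c i) (c (i + 1))) χ) ∧
      ∀ i ≤ m, ‖fn n (c i)‖ ≤ Y := by
  obtain ⟨lam, hlam, hconv⟩ := hJ
  have hT1 : 0 < T + 1 := by linarith
  obtain ⟨N₀, hN₀⟩ := hconv (T + 1) hT1 (χ / 8) (by positivity)
  obtain ⟨hmono₀, hcont₀, h0₀, -⟩ := hlam N₀
  obtain ⟨hr₀, hl₀⟩ := cadlag_comp_of_strictMono hmono₀ hcont₀ h0₀ (hr N₀) (hl N₀)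
  obtain ⟨m, τ, hτ0, hτm, hτ⟩ := hasOscPartition_of_cadlag hr₀ hl₀ hT1.le (half_pos hχ)
  have hτmem : ∀ i ≤ m, τ i ∈ Icc 0 (T + 1) := fun i hi => by
    have hmon := monotoneOn_Iic_of_le_succ_s13 fun i hi => (hτ i hi).1.le
    exact ⟨hτ0 ▸ hmon (Nat.zero_le m) hi (Nat.zero_le i), hτm ▸ hmon hi (mem_Iic.2 le_rfl) hi⟩
  obtain ⟨G, hG, hGle⟩ := exists_pos_le_sub_of_lt_succ fun i hi => (hτ i hi).1
  obtain ⟨Y₀, hY₀⟩ := ((Set.finite_Iic m).image fun i => ‖w (τ i)‖).bddAbove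
  set e := min (χ / 8) (min (G / 4) 1)
  have he : e ≤ χ / 8 ∧ e ≤ G / 4 ∧ e ≤ 1 :=
    ⟨min_le_left _ _, (min_le_right _ _).trans (min_le_left _ _),
      (min_le_right _ _).trans (min_le_right _ _)⟩
  obtain ⟨N₁, hN₁⟩ := hconv (T + 1) hT1 e (by positivity)
  refine ⟨m, G / 2, Y₀ + χ, max N₀ N₁, half_pos hG, fun n hn => ?_⟩
  obtain ⟨hmono, hcont, h0, -⟩ := hlam n
  have hclose := fun t ht => hN₁ n (le_of_max_le_right hn) t ht
  refine ⟨fun i => lam n (τ i), by simp [hτ0, h0], ?_, fun i hi => ⟨?_, ?_⟩, fun i hi => ?_⟩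
  · have := abs_le.1 (hclose (T + 1) ⟨hT1.le, le_rfl⟩).1
    simp only [hτm]
    linarith
  · have h1 := abs_le.1 (hclose _ (hτmem i hi.le)).1
    have h2 := abs_le.1 (hclose _ (hτmem (i + 1) hi)).1
    linarith [hGle i hi]
  · have hmem : ∀ v ∈ Ico (τ i) (τ (i + 1)), v ∈ Icc 0 (T + 1) := fun v hv =>
      ⟨(hτmem i hi.le).1.trans hv.1, hv.2.le.trans (hτmem (i + 1) hi).2⟩
    have hw : OscLeOn w (Ico (τ i) (τ (i + 1))) (3 * χ / 4) :=
      (hτ i hi).2.of_dist_le (fun v hv => by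
        rw [dist_comm, dist_eq_norm]; exact (hN₀ N₀ le_rfl v (hmem v hv)).2) (by linarith)
    exact OscLeOn.of_comp hmono hcont (hw.of_dist_le (fun v hv => by
      rw [dist_eq_norm]; exact (hclose v (hmem v hv)).2) (by linarith [he.1]))
  · have h1 := (hclose _ (hτmem i hi)).2
    have h2 := hY₀ (mem_image_of_mem _ (mem_Iic.2 hi))
    linarith [norm_le_insert' (fn n (lam n (τ i))) (w (τ i))]

end Skorokhod

lemma Cadlag.prodMk {d : ℕ} {y z : ℝ → EuclideanSpace ℝ (Fin d)} (hy : Cadlag y)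
    (hz : Cadlag z) :
    (∀ t, 0 ≤ t → ContinuousWithinAt (fun t => (y t, z t)) (Ici t) t) ∧
      ∀ t, 0 < t → ∃ l, Tendsto (fun t => (y t, z t)) (𝓝[<] t) (𝓝 l) := by
  refine ⟨fun t ht => (hy.1 t ht).prodMk (hz.1 t ht), fun t ht => ?_⟩
  obtain ⟨l₁, h₁⟩ := hy.2 t ht
  obtain ⟨l₂, h₂⟩ := hz.2 t ht
  exact ⟨(l₁, l₂), h₁.prodMk_nhds h₂⟩

section Projection

variable {d : ℕ} {C : Set (EuclideanSpace ℝ (Fin d))}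
  {proj : EuclideanSpace ℝ (Fin d) → EuclideanSpace ℝ (Fin d)}

local notation "ℝᵈ" => EuclideanSpace ℝ (Fin d)

lemma IsProjOn.norm_sub_le (h : IsProjOn C proj) (z : ℝᵈ) {w : ℝᵈ} (hw : w ∈ C) :
    ‖z - proj z‖ ≤ ‖z - w‖ := by
  simpa only [dist_eq_norm] using (h z).2 w hw

lemma IsProjOn.norm_sub_eq_infDist (h : IsProjOn C proj) (z : ℝᵈ) :
    ‖z - proj z‖ = Metric.infDist z C :=
  le_antisymm ((Metric.le_infDist ⟨_, (h z).1⟩).2 fun w hw => by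
      simpa only [dist_eq_norm] using h.norm_sub_le z hw)
    (by simpa only [dist_eq_norm] using Metric.infDist_le_dist_of_mem (h z).1)

lemma IsProjOn.lipschitzWith (h : IsProjOn C proj) : LipschitzWith 1 fun z => ‖z - proj z‖ := by
  simpa only [h.norm_sub_eq_infDist] using Metric.lipschitz_infDist_pt C

lemma IsProjOn.norm_sub_le_add (h : IsProjOn C proj) (z z' : ℝᵈ) :
    ‖z - proj z‖ ≤ ‖z' - proj z'‖ + ‖z - z'‖ := by
  have := h.lipschitzWith.dist_le_mul z z'
  rw [NNReal.coe_one, one_mul, Real.dist_eq, dist_eq_norm] at this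
  linarith [le_abs_self (‖z - proj z‖ - ‖z' - proj z'‖)]

lemma IsProjOn.inner_le (hC : Convex ℝ C) (h : IsProjOn C proj) (z : ℝᵈ) {w : ℝᵈ}
    (hw : w ∈ C) : ⟪z - proj z, w - proj z⟫ ≤ 0 :=
  (norm_eq_iInf_iff_real_inner_le_zero hC (h z).1).1
    (by simp only [h.norm_sub_eq_infDist, Metric.infDist_eq_iInf, dist_eq_norm]) w hw

lemma IsProjOn.sq_le_inner (hC : Convex ℝ C) (h : IsProjOn C proj) (z : ℝᵈ) {b : ℝᵈ}
    (hb : b ∈ C) : ‖z - proj z‖ ^ 2 ≤ ⟪z - proj z, z - b⟫ := by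
  have hsplit : ⟪z - proj z, z - b⟫ = ‖z - proj z‖ ^ 2 - ⟪z - proj z, b - proj z⟫ := by
    rw [← real_inner_self_eq_norm_sq, ← inner_sub_right, sub_sub_sub_cancel_right]
  linarith [h.inner_le hC z hb]

lemma IsProjOn.mul_norm_le_inner (hC : Convex ℝ C) (h : IsProjOn C proj) {a : ℝᵈ} {r : ℝ}
    (hr : 0 ≤ r) (hball : Metric.closedBall a r ⊆ C) (z : ℝᵈ) :
    r * ‖z - proj z‖ ≤ ⟪z - proj z, z - a⟫ := by
  set p := z - proj z
  rcases eq_or_ne p 0 with hp | hp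
  · simp [hp]
  have hpn : 0 < ‖p‖ := norm_pos_iff.2 hp
  have hmem : a + (r / ‖p‖) • p ∈ C := hball <| by
    rw [Metric.mem_closedBall, dist_eq_norm, add_sub_cancel_left, norm_smul, Real.norm_eq_abs,
      abs_of_nonneg (by positivity), div_mul_cancel₀ _ hpn.ne']
  have h1 := h.sq_le_inner hC z hmem
  have h2 : ⟪p, z - (a + (r / ‖p‖) • p)⟫ = ⟪p, z - a⟫ - r * ‖p‖ := by
    rw [sub_add_eq_sub_sub, inner_sub_right, real_inner_smul_right, real_inner_self_eq_norm_sq]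
    field_simp
  nlinarith [sq_nonneg ‖p‖]

end Projection

/-- Bounds the variation of the penalization over the first `i` cells of a partition: a cell
starting where `‖x - a‖ ≤ R + variationBound R r i` adds at most `‖x - a‖² / r` (see
`PenalizedSol.variation_le_of_oscLeOn`). -/
noncomputable def variationBound (R r : ℝ) : ℕ → ℝ
  | 0 => 0
  | i + 1 => variationBound R r i + (R + variationBound R r i) ^ 2 / r

lemma variationBound_nonneg (R : ℝ) {r : ℝ} (hr : 0 ≤ r) (i : ℕ) : 0 ≤ variationBound R r i := by
  induction i with
  | zero => exact le_rfl
  | succ i ih => rw [variationBound]; positivity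

namespace PenalizedSol

variable {d : ℕ} {C : Set (EuclideanSpace ℝ (Fin d))}
  {proj : EuclideanSpace ℝ (Fin d) → EuclideanSpace ℝ (Fin d)} {c : ℝ}
  {x y : ℝ → EuclideanSpace ℝ (Fin d)}

local notation "ℝᵈ" => EuclideanSpace ℝ (Fin d)

lemma integrableOn (hx : PenalizedSol proj c y x) {σ τ : ℝ} (hσ : 0 ≤ σ) :
    IntegrableOn (fun v => x v - proj (x v)) (Ioc σ τ) := by
  rcases le_or_gt σ τ with hστ | hτσ
  · exact (hx.1 τ (hσ.trans hστ)).1.mono_set (Ioc_subset_Ioc hσ le_rfl)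
  · simp [Ioc_eq_empty_of_le hτσ.le]

lemma sub_eq_s13 (hx : PenalizedSol proj c y x) {σ τ : ℝ} (hσ : 0 ≤ σ) (hστ : σ ≤ τ) :
    x τ - y τ = x σ - y σ - c • ∫ v in Ioc σ τ, (x v - proj (x v)) := by
  have hτ := hx.2 τ (hσ.trans hστ)
  have hσ' := hx.2 σ hσ
  rw [intervalIntegral.integral_of_le (hσ.trans hστ), ← Ioc_union_Ioc_eq_Ioc hσ hστ,
    setIntegral_union (Ioc_disjoint_Ioc_of_le le_rfl) measurableSet_Ioc
      (hx.integrableOn le_rfl) (hx.integrableOn hσ)] at hτ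
  rw [intervalIntegral.integral_of_le hσ] at hσ'
  rw [hτ, hσ', smul_add]
  abel

lemma norm_sub_le_variation (hx : PenalizedSol proj c y x) (hc : 0 ≤ c) {t : ℝ} (ht : 0 ≤ t) :
    ‖x t - y t‖ ≤ c * ∫ v in Ioc 0 t, ‖x v - proj (x v)‖ := by
  have h0 : x 0 - y 0 = 0 := by simp [hx.2 0 le_rfl]
  rw [hx.sub_eq_s13 le_rfl ht, h0, zero_sub, norm_neg, norm_smul, Real.norm_of_nonneg hc]
  exact mul_le_mul_of_nonneg_left (norm_integral_le_integral_norm _) hc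

lemma continuousOn_sub (hx : PenalizedSol proj c y x) {σ τ : ℝ} (hσ : 0 ≤ σ) :
    ContinuousOn (fun t => x t - y t) (Icc σ τ) := by
  have : ContinuousOn (fun t => x σ - y σ - c • ∫ v in Ioc σ t, (x v - proj (x v))) (Icc σ τ) :=
    continuousOn_const.sub ((continuousOn_setIntegral_Ioc (hx.integrableOn hσ)).const_smul c)
  exact this.congr fun t ht => hx.sub_eq_s13 hσ ht.1

/-- The energy inequality for `x - y + y w`, the solution with the input frozen at time `w`. -/
lemma sq_norm_sub_le_of_le_inner (hx : PenalizedSol proj c y x) (hc : 0 ≤ c) {σ τ : ℝ}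
    (hσ : 0 ≤ σ) (hστ : σ ≤ τ) (w : ℝ) (b : ℝᵈ) {B : ℝ → ℝ} (hB : IntegrableOn B (Ioc σ τ))
    (hBle : ∀ v ∈ Ioo σ τ,
      B v ≤ ⟪x v - proj (x v), x v - b⟫ - ‖x v - proj (x v)‖ * ‖y v - y w‖) :
    ‖x τ - y τ + y w - b‖ ^ 2 ≤ ‖x σ - y σ + y w - b‖ ^ 2 - 2 * c * ∫ v in Ioc σ τ, B v := by
  refine _root_.sq_norm_sub_le_of_le_inner (P := fun v => x v - y v + y w) hστ
    (hx.integrableOn hσ) hc (fun v hv => ?_) hB fun v hv => (hBle v hv).trans ?_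
  · simp only [hx.sub_eq_s13 hσ hv.1]
    abel
  have hsplit : x v - y v + y w - b = (x v - b) - (y v - y w) := by abel
  rw [hsplit]
  linarith [inner_sub_right (𝕜 := ℝ) (x v - proj (x v)) (x v - b) (y v - y w),
    real_inner_le_norm (x v - proj (x v)) (y v - y w)]

/-- While `y` moves by at most `r / 2`, each unit of variation decreases `‖x - y + y α - a‖²` by
at least `r`, because `C` contains the ball of radius `r` about `a`. -/
lemma variation_le_of_oscLeOn (hC : Convex ℝ C) (hproj : IsProjOn C proj)
    (hx : PenalizedSol proj c y x) (hc : 0 ≤ c) {a : ℝᵈ} {r : ℝ} (hr : 0 < r)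
    (hball : Metric.closedBall a r ⊆ C) {α τ : ℝ} (hα : 0 ≤ α) (hατ : α ≤ τ)
    (hy : OscLeOn y (Ico α τ) (r / 2)) :
    c * ∫ v in Ioc α τ, ‖x v - proj (x v)‖ ≤ ‖x α - a‖ ^ 2 / r := by
  have henergy := hx.sq_norm_sub_le_of_le_inner hc hα hατ α a
    (B := fun v => r / 2 * ‖x v - proj (x v)‖) ((hx.integrableOn hα).norm.const_mul _)
    fun v hv => by
      have h1 := hproj.mul_norm_le_inner hC hr.le hball (x v)
      have h2 := hy v ⟨hv.1.le, hv.2⟩ α ⟨le_rfl, hv.1.trans hv.2⟩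
      nlinarith [norm_nonneg (x v - proj (x v))]
  rw [sub_add_cancel, integral_const_mul] at henergy
  rw [le_div_iff₀ hr]
  nlinarith [sq_nonneg ‖x τ - y τ + y α - a‖]

/-- Far from `C`, the penalization dominates the drift of the input frozen at time `w`, so the
distance to `C` cannot increase. -/
lemma dist_frozen_le_of_forall_le (hC : Convex ℝ C) (hproj : IsProjOn C proj)
    (hx : PenalizedSol proj c y x) (hc : 0 ≤ c) {σ τ w η : ℝ} (hσ : 0 ≤ σ) (hστ : σ ≤ τ)
    (hy : ∀ v ∈ Ioo σ τ, ‖y v - y w‖ ≤ η)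
    (hfar : ∀ v ∈ Ioo σ τ, 2 * η ≤ ‖x v - y v + y w - proj (x v - y v + y w)‖) :
    ‖x τ - y τ + y w - proj (x τ - y τ + y w)‖ ≤ ‖x σ - y σ + y w - proj (x σ - y σ + y w)‖ := by
  set P : ℝ → ℝᵈ := fun v => x v - y v + y w
  have hb : proj (P σ) ∈ C := (hproj (P σ)).1
  have henergy := hx.sq_norm_sub_le_of_le_inner hc hσ hστ w (proj (P σ)) (B := fun _ => 0)
    (integrableOn_zero) fun v hv => by
      have h1 := hproj.sq_le_inner hC (x v) hb
      have h2 := hproj.norm_sub_le_add (P v) (x v)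
      have h3 : P v - x v = y w - y v := by simp only [P]; abel
      rw [h3, norm_sub_rev (y w)] at h2
      have h4 := hy v hv
      have h5 : 2 * η ≤ ‖P v - proj (P v)‖ := hfar v hv
      nlinarith [norm_nonneg (x v - proj (x v)), norm_nonneg (y v - y w)]
  rw [integral_zero, mul_zero, sub_zero] at henergy
  calc ‖P τ - proj (P τ)‖ ≤ ‖P τ - proj (P σ)‖ := hproj.norm_sub_le _ hb
    _ ≤ ‖P σ - proj (P σ)‖ := (pow_le_pow_iff_left₀ (norm_nonneg _) (norm_nonneg _)
        two_ne_zero).1 henergy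

lemma dist_frozen_le_max (hC : Convex ℝ C) (hproj : IsProjOn C proj)
    (hx : PenalizedSol proj c y x) (hc : 0 ≤ c) {w s η : ℝ} (hw : 0 ≤ w) (hws : w ≤ s)
    (hy : OscLeOn y (Icc w s) η) :
    ‖x s - y s + y w - proj (x s - y s + y w)‖ ≤ max ‖x w - proj (x w)‖ (2 * η) := by
  set D : ℝ → ℝ := fun v => ‖x v - y v + y w - proj (x v - y v + y w)‖
  set M := max ‖x w - proj (x w)‖ (2 * η)
  have hD : ContinuousOn D (Icc w s) := hproj.lipschitzWith.continuous.comp_continuousOn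
    ((hx.continuousOn_sub hw).add continuousOn_const)
  have hclosed : IsClosed (D ⁻¹' Iic M ∩ Icc w s) := by
    rw [inter_comm]; exact hD.preimage_isClosed_of_isClosed isClosed_Icc isClosed_Iic
  have hstart : w ∈ D ⁻¹' Iic M := by
    simp only [D, sub_add_cancel, mem_preimage, mem_Iic]; exact le_max_left _ _
  refine hclosed.Icc_subset_of_forall_exists_gt hstart (fun t ht t' htt' => ?_) ⟨hws, le_rfl⟩
  by_contra hempty
  have hfar : ∀ v ∈ Ioc t (min t' s), M < D v := fun v hv => not_le.1 fun hvM =>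
    hempty ⟨v, hvM, hv.1, hv.2.trans (min_le_left _ _)⟩
  have hts : t < min t' s := lt_min htt' ht.2.2
  have hdecr := hx.dist_frozen_le_of_forall_le hC hproj hc (hw.trans ht.2.1) hts.le
    (fun v hv => hy v ⟨ht.2.1.trans hv.1.le, hv.2.le.trans (min_le_right _ _)⟩ w ⟨le_rfl, hws⟩)
    fun v hv => (le_max_right _ _).trans (hfar v ⟨hv.1, hv.2.le⟩).le
  exact (hfar _ ⟨hts, le_rfl⟩).not_ge (hdecr.trans ht.1)

lemma norm_sub_le_of_oscLeOn (hC : Convex ℝ C) (hproj : IsProjOn C proj)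
    (hx : PenalizedSol proj c y x) (hc : 0 ≤ c) {s u η : ℝ} (hs : 0 ≤ s) (hsu : s ≤ u)
    (hη : 0 ≤ η) (hy : OscLeOn y (Icc s u) η) :
    ‖x u - x s‖ ≤ η + 2 * ‖x s - proj (x s)‖ +
      √(2 * η * (c * ∫ v in Ioc s u, ‖x v - proj (x v)‖)) := by
  set b := proj (x s)
  set I := c * ∫ v in Ioc s u, ‖x v - proj (x v)‖
  have hI : 0 ≤ I := mul_nonneg hc (setIntegral_nonneg measurableSet_Ioc fun _ _ => norm_nonneg _)
  have henergy := hx.sq_norm_sub_le_of_le_inner hc hs hsu s b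
    (B := fun v => -(η * ‖x v - proj (x v)‖)) ((hx.integrableOn hs).norm.const_mul η).neg
    fun v hv => by
      have h1 := hproj.sq_le_inner hC (x v) (hproj (x s)).1
      have h2 := hy v ⟨hv.1.le, hv.2.le⟩ s ⟨le_rfl, hsu⟩
      nlinarith [norm_nonneg (x v - proj (x v))]
  rw [sub_add_cancel, integral_neg, integral_const_mul] at henergy
  have hfrozen : ‖x u - y u + y s - b‖ ≤ ‖x s - b‖ + √(2 * η * I) := by
    refine (pow_le_pow_iff_left₀ (norm_nonneg _) (by positivity) two_ne_zero).1 ?_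
    nlinarith [Real.sq_sqrt (by positivity : 0 ≤ 2 * η * I), Real.sqrt_nonneg (2 * η * I),
      norm_nonneg (x s - b)]
  have hsplit : x u - x s = (y u - y s) + (x u - y u + y s - b) - (x s - b) := by abel
  calc ‖x u - x s‖ ≤ ‖y u - y s‖ + ‖x u - y u + y s - b‖ + ‖x s - b‖ := by
        rw [hsplit]; exact (norm_sub_le _ _).trans (by gcongr; exact norm_add_le _ _)
    _ ≤ η + 2 * ‖x s - b‖ + √(2 * η * I) := by
        linarith [hy u ⟨hsu, le_rfl⟩ s ⟨le_rfl, hsu⟩]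

/-- If the variation on `[s - θ, u]` is less than `c θ η`, then `x` comes within `η` of `C` during
`[s - θ, s]`, stays within `3 η` of it up to `s`, and so moves by `O(η + √(η V))` on `[s, u]`. -/
lemma norm_sub_le_of_variation_lt (hC : Convex ℝ C) (hproj : IsProjOn C proj)
    (hx : PenalizedSol proj c y x) (hc : 0 ≤ c) {s u θ η V : ℝ} (hη : 0 ≤ η) (hsθ : 0 ≤ s - θ)
    (hsu : s ≤ u) (hy : OscLeOn y (Icc (s - θ) u) η)
    (hV : c * ∫ v in Ioc (s - θ) u, ‖x v - proj (x v)‖ ≤ V) (hVθ : V < c * θ * η) :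
    ‖x u - x s‖ ≤ 7 * η + √(2 * η * V) := by
  have hint : IntegrableOn (fun v => ‖x v - proj (x v)‖) (Ioc (s - θ) u) :=
    (hx.integrableOn hsθ).norm
  have hsub : ∀ {σ τ}, s - θ ≤ σ → τ ≤ u → c * ∫ v in Ioc σ τ, ‖x v - proj (x v)‖ ≤ V :=
    fun h1 h2 => (mul_le_mul_of_nonneg_left (setIntegral_mono_set hint
      (ae_of_all _ fun _ => norm_nonneg _) (Ioc_subset_Ioc h1 h2).eventuallyLE) hc).trans hV
  have hθ : 0 < θ := by
    have hV0 : 0 ≤ V :=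
      (mul_nonneg hc (setIntegral_nonneg measurableSet_Ioc fun _ _ => norm_nonneg _)).trans hV
    by_contra! hθ
    nlinarith [mul_nonpos_of_nonneg_of_nonpos (mul_nonneg hc hη) hθ]
  obtain ⟨v₀, hv₀, hfv₀⟩ : ∃ v₀ ∈ Ioc (s - θ) s, ‖x v₀ - proj (x v₀)‖ ≤ η := by
    refine exists_mem_Ioc_le_of_integral_le (by linarith) (hint.mono_set
      (Ioc_subset_Ioc le_rfl hsu)) (le_of_lt (lt_of_mul_lt_mul_left ?_ hc))
    calc c * ∫ v in Ioc (s - θ) s, ‖x v - proj (x v)‖ ≤ V := hsub le_rfl hsu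
      _ < c * ((s - (s - θ)) * η) := by rw [sub_sub_cancel, ← mul_assoc]; exact hVθ
  have hfrozen := hx.dist_frozen_le_max hC hproj hc (hsθ.trans hv₀.1.le) hv₀.2
    (hy.mono (Icc_subset_Icc hv₀.1.le hsu))
  have hfs : ‖x s - proj (x s)‖ ≤ 3 * η := by
    have h1 := hproj.norm_sub_le_add (x s) (x s - y s + y v₀)
    rw [show x s - (x s - y s + y v₀) = y s - y v₀ by abel] at h1
    linarith [hfrozen.trans (max_le (hfv₀.trans (by linarith)) le_rfl),
      hy s ⟨by linarith, hsu⟩ v₀ ⟨hv₀.1.le, hv₀.2.trans hsu⟩]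
  have hinc := hx.norm_sub_le_of_oscLeOn hC hproj hc (by linarith) hsu hη
    (hy.mono (Icc_subset_Icc (by linarith) le_rfl))
  have hsqrt := Real.sqrt_le_sqrt (mul_le_mul_of_nonneg_left (hsub (σ := s) (τ := u)
    (by linarith) le_rfl) (by positivity : 0 ≤ 2 * η))
  linarith

lemma variation_le_variationBound (hC : Convex ℝ C) (hproj : IsProjOn C proj)
    (hx : PenalizedSol proj c y x) (hc : 0 ≤ c) {a : ℝᵈ} {r Y : ℝ} (hr : 0 < r)
    (hball : Metric.closedBall a r ⊆ C) {cc : ℕ → ℝ} (m : ℕ) (hcc0 : cc 0 = 0)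
    (hcells : ∀ i < m, cc i ≤ cc (i + 1) ∧ OscLeOn y (Ico (cc i) (cc (i + 1))) (r / 2))
    (hY : ∀ i ≤ m, ‖y (cc i)‖ ≤ Y) :
    c * ∫ v in Ioc 0 (cc m), ‖x v - proj (x v)‖ ≤ variationBound (Y + ‖a‖) r m := by
  induction m with
  | zero => simp [hcc0, variationBound]
  | succ m ih =>
    have ih := ih (fun i hi => hcells i (by omega)) (fun i hi => hY i (by omega))
    obtain ⟨hmm, hosc⟩ := hcells m (by omega)
    have h0 : 0 ≤ cc m := hcc0 ▸ monotoneOn_Iic_of_le_succ_s13 (fun i hi => (hcells i hi).1)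
      (Nat.zero_le _) (mem_Iic.2 (by omega)) (Nat.zero_le m)
    have hsplit : ∫ v in Ioc 0 (cc (m + 1)), ‖x v - proj (x v)‖ = (∫ v in Ioc 0 (cc m),
        ‖x v - proj (x v)‖) + ∫ v in Ioc (cc m) (cc (m + 1)), ‖x v - proj (x v)‖ := by
      rw [← setIntegral_union (Ioc_disjoint_Ioc_of_le le_rfl) measurableSet_Ioc
        (hx.integrableOn le_rfl).norm (hx.integrableOn h0).norm, Ioc_union_Ioc_eq_Ioc h0 hmm]
    have hxa : ‖x (cc m) - a‖ ≤ Y + ‖a‖ + variationBound (Y + ‖a‖) r m := by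
      have h1 := hx.norm_sub_le_variation hc h0
      have h2 : x (cc m) - a = y (cc m) + (x (cc m) - y (cc m)) - a := by abel
      rw [h2]
      linarith [norm_sub_le (y (cc m) + (x (cc m) - y (cc m))) a,
        norm_add_le (y (cc m)) (x (cc m) - y (cc m)), hY m (by omega)]
    have hcell := hx.variation_le_of_oscLeOn hC hproj hc hr hball h0 hmm hosc
    have hsq : ‖x (cc m) - a‖ ^ 2 / r ≤ (Y + ‖a‖ + variationBound (Y + ‖a‖) r m) ^ 2 / r := by
      gcongr
    rw [variationBound, hsplit, mul_add]
    linarith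

lemma min_norm_sub_le {z : ℝ → ℝᵈ} (hC : Convex ℝ C) (hproj : IsProjOn C proj)
    (hx : PenalizedSol proj c y x) (hc : 0 ≤ c) {cf : ℕ → ℝ} {m : ℕ} {G η V T s u t : ℝ}
    (hcf0 : cf 0 = 0) (hcells : ∀ i < m, cf i + G ≤ cf (i + 1) ∧
      OscLeOn y (Ico (cf i) (cf (i + 1))) η ∧ OscLeOn z (Ico (cf i) (cf (i + 1))) η)
    (hη : 0 ≤ η) (hV : c * ∫ v in Ioc 0 T, ‖x v - proj (x v)‖ ≤ V) (hVG : V < c * (G / 2) * η)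
    (hs : 0 ≤ s) (hsu : s ≤ u) (hut : u ≤ t) (huT : u ≤ T) (hum : u < cf m)
    (hts : t - s < G / 2) :
    min ‖x u - x s‖ ‖z t - z u‖ ≤ 7 * η + √(2 * η * V) := by
  have hG : 0 ≤ G := by
    have hV0 : 0 ≤ V :=
      (mul_nonneg hc (setIntegral_nonneg measurableSet_Ioc fun _ _ => norm_nonneg _)).trans hV
    by_contra! hG
    nlinarith [mul_nonpos_of_nonneg_of_nonpos (mul_nonneg hc hη) hG.le]
  refine min_norm_sub_le_of_cells hcf0 (fun i hi => ⟨(hcells i hi).1, (hcells i hi).2.2⟩)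
    (by linarith [Real.sqrt_nonneg (2 * η * V)]) (fun i hi hsi hui => ?_) hs hsu hut hum hts
  have hci : 0 ≤ cf i := hcf0 ▸ monotoneOn_Iic_of_le_succ_s13
    (fun j hj => by linarith [(hcells j hj).1]) (Nat.zero_le _) (mem_Iic.2 hi.le) (Nat.zero_le i)
  refine hx.norm_sub_le_of_variation_lt hC hproj hc hη (by linarith) hsu
    ((hcells i hi).2.1.mono (Icc_subset_Ico (by linarith) hui)) (le_trans ?_ hV) hVG
  exact mul_le_mul_of_nonneg_left (setIntegral_mono_set (hx.integrableOn le_rfl).norm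
    (ae_of_all _ fun _ => norm_nonneg _) (Ioc_subset_Ioc (by linarith) huT).eventuallyLE) hc

lemma min_norm_sub_le_of_J1Tendsto (hC : Convex ℝ C) (hproj : IsProjOn C proj) {a : ℝᵈ} {r : ℝ}
    (hr : 0 < r) (hball : Metric.closedBall a r ⊆ C) {xk yk zk : ℕ → ℝ → ℝᵈ} {ck : ℕ → ℝ}
    {w : ℝ → ℝᵈ × ℝᵈ} (hy : ∀ k, Cadlag (yk k)) (hz : ∀ k, Cadlag (zk k))
    (hJ : J1Tendsto (fun k t => (yk k t, zk k t)) w) (hck : Tendsto ck atTop atTop)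
    (hxk : ∀ k, PenalizedSol proj (ck k) (yk k) (xk k)) {q ε : ℝ} (hq : 0 ≤ q) (hε : 0 < ε) :
    ∃ δ > 0, ∃ K, ∀ k ≥ K, ∀ s u t : ℝ, 0 ≤ s → s < u → u < t → t ≤ q → t - s < δ →
      min ‖xk k u - xk k s‖ ‖zk k t - zk k u‖ ≤ ε := by
  have hright k := ((hy k).prodMk (hz k)).1
  have hleft k := ((hy k).prodMk (hz k)).2
  obtain ⟨m₀, δ₀, Y, K₀, hδ₀, hcoarse⟩ := hJ.exists_uniform_partition hright hleft hq (half_pos hr)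
  set V := variationBound (Y + ‖a‖) r m₀ + 1
  have hV : 0 < V := by linarith [variationBound_nonneg (Y + ‖a‖) hr.le m₀]
  set η := min (ε / 14) (ε ^ 2 / (8 * V))
  have hη : 0 < η := lt_min (by positivity) (by positivity)
  have hηε : 7 * η + √(2 * η * V) ≤ ε := by
    have h1 : 2 * η * V ≤ (ε / 2) ^ 2 := by
      have := (le_div_iff₀ (by positivity)).1 (min_le_right (ε / 14) (ε ^ 2 / (8 * V)))
      nlinarith
    linarith [min_le_left (ε / 14) (ε ^ 2 / (8 * V)),
      (Real.sqrt_le_sqrt h1).trans_eq (Real.sqrt_sq (by positivity : 0 ≤ ε / 2))]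
  obtain ⟨m₁, G, _, K₁, hG, hfine⟩ := hJ.exists_uniform_partition hright hleft hq hη
  obtain ⟨K₂, hK₂⟩ := eventually_atTop.1 (hck.eventually_gt_atTop (V / (G / 2 * η)))
  refine ⟨G / 2, half_pos hG, max K₀ (max K₁ K₂), fun k hk s u t hs hsu hut htq hts => ?_⟩
  obtain ⟨cc, hcc0, hccm, hccells, hccY⟩ := hcoarse k (le_of_max_le_left hk)
  obtain ⟨cf, hcf0, hcfm, hcfcells, -⟩ := hfine k ((le_max_left _ _).trans (le_of_max_le_right hk))
  have hVG : V < ck k * (G / 2) * η := by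
    have := hK₂ k ((le_max_right _ _).trans (le_of_max_le_right hk))
    rwa [div_lt_iff₀ (by positivity), ← mul_assoc] at this
  have hc : 0 ≤ ck k := by
    by_contra! hc
    nlinarith [mul_pos hG hη]
  have hvar := (hxk k).variation_le_variationBound hC hproj hc hr hball m₀ hcc0
    (fun i hi => ⟨by linarith [(hccells i hi).1], (hccells i hi).2.fst⟩)
    fun i hi => (norm_fst_le _).trans (hccY i hi)
  refine ((hxk k).min_norm_sub_le hC hproj hc hcf0
    (fun i hi => ⟨(hcfcells i hi).1, (hcfcells i hi).2.fst, (hcfcells i hi).2.snd⟩) hη.le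
    (hvar.trans (by linarith)) hVG hs hsu.le hut.le (hut.le.trans (htq.trans hccm))
    (hut.trans_le (htq.trans hcfm)) hts).trans hηε

end PenalizedSol

theorem stmt13_general (d : ℕ) (D : Set (EuclideanSpace ℝ (Fin d)))
    (hD : IsOpen D) (hconv : Convex ℝ D) (hne : D.Nonempty)
    (proj : EuclideanSpace ℝ (Fin d) → EuclideanSpace ℝ (Fin d))
    (hproj : IsProjOn (closure D) proj)
    (yn zn : ℕ → ℝ → EuclideanSpace ℝ (Fin d))
    (hyn : ∀ n, Cadlag (yn n)) (hzn : ∀ n, Cadlag (zn n))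
    (hcomp : ∀ φ : ℕ → ℕ, StrictMono φ →
      ∃ ψ : ℕ → ℕ, StrictMono ψ ∧
      ∃ w : ℝ → EuclideanSpace ℝ (Fin d) × EuclideanSpace ℝ (Fin d),
        J1Tendsto (fun n => fun t => (yn (φ (ψ n)) t, zn (φ (ψ n)) t)) w)
    (xn : ℕ → ℝ → EuclideanSpace ℝ (Fin d))
    (hxn : ∀ n : ℕ, PenalizedSol proj (n : ℝ) (yn n) (xn n)) :
    ∀ q : ℝ, 0 ≤ q → ∀ ε > (0:ℝ), ∃ δ > (0:ℝ), ∃ N : ℕ, ∀ n ≥ N,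
      ∀ s u t : ℝ, 0 ≤ s → s < u → u < t → t ≤ q → t - s < δ →
        min ‖xn n u - xn n s‖ ‖zn n t - zn n u‖ ≤ ε := by
  intro q hq ε hε
  obtain ⟨a, ha⟩ := hne
  obtain ⟨r, hr, hball⟩ := Metric.isOpen_iff.1 hD a ha
  have hball' : Metric.closedBall a (r / 2) ⊆ closure D :=
    ((Metric.closedBall_subset_ball (half_lt_self hr)).trans hball).trans subset_closure
  by_contra! hbad
  obtain ⟨φ, hφ, hφbad⟩ := extraction_forall_of_frequently fun j : ℕ =>
    frequently_atTop.2 fun N => hbad (1 / (j + 1)) (by positivity) N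
  obtain ⟨ψ, hψ, w, hJ⟩ := hcomp φ hφ
  obtain ⟨δ, hδ, K, hK⟩ := PenalizedSol.min_norm_sub_le_of_J1Tendsto hconv.closure hproj
    (half_pos hr) hball' (fun k => hyn _) (fun k => hzn _) hJ
    (tendsto_natCast_atTop_atTop.comp (hφ.comp hψ).tendsto_atTop) (fun k => hxn _) hq hε
  obtain ⟨j, hj⟩ := exists_nat_one_div_lt hδ
  set k := max j K
  obtain ⟨s, u, t, hs, hsu, hut, htq, hts, hmin⟩ := hφbad (ψ k)
  refine hmin.not_ge (hK k (le_max_right _ _) s u t hs hsu hut htq (hts.trans_le ?_ |>.trans hj))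
  gcongr
  exact (le_max_left j K).trans hψ.le_apply

/-- Corollary 2.6: no oscillations of `x^n` precede oscillations of `z^n`
(`lim_{δ↓0} limsup_n ω̄''_{(x^n, z^n)}(δ, q) = 0`), when `{(y^n, z^n)}` is relatively
compact in the `J₁` topology. -/
theorem stmt13 (d : ℕ) (D : Set (EuclideanSpace ℝ (Fin d)))
    (hD : IsOpen D) (hconv : Convex ℝ D) (hne : D.Nonempty)
    (proj : EuclideanSpace ℝ (Fin d) → EuclideanSpace ℝ (Fin d))
    (hproj : IsProjOn (closure D) proj)
    (yn zn : ℕ → ℝ → EuclideanSpace ℝ (Fin d))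
    (hyn : ∀ n, Cadlag (yn n)) (hzn : ∀ n, Cadlag (zn n))
    (hyn0 : ∀ n, yn n 0 ∈ closure D)
    (hcomp : ∀ φ : ℕ → ℕ, StrictMono φ →
      ∃ ψ : ℕ → ℕ, StrictMono ψ ∧
      ∃ w : ℝ → EuclideanSpace ℝ (Fin d) × EuclideanSpace ℝ (Fin d),
        J1Tendsto (fun n => fun t => (yn (φ (ψ n)) t, zn (φ (ψ n)) t)) w)
    (xn : ℕ → ℝ → EuclideanSpace ℝ (Fin d))
    (hxn : ∀ n : ℕ, PenalizedSol proj (n : ℝ) (yn n) (xn n)) :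
    ∀ q : ℝ, 0 ≤ q → ∀ ε > (0:ℝ), ∃ δ > (0:ℝ), ∃ N : ℕ, ∀ n ≥ N,
      ∀ s u t : ℝ, 0 ≤ s → s < u → u < t → t ≤ q → t - s < δ →
        min ‖xn n u - xn n s‖ ‖zn n t - zn n u‖ ≤ ε :=
  stmt13_general d D hD hconv hne proj hproj yn zn hyn hzn hcomp xn hxn
end
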